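/- arXiv:math/0506223 — 11 statements merged into one kernel-verified Lean document; each statement's English description precedes it below -/
import Mathlib

section
/- In characteristic zero, the join of the principal monomial ideals ⟨x^i⟩ and ⟨x^j⟩ in K[x] (with i,j ≥ 1) equals ⟨x^{i+j-1}⟩. -/
open MvPolynomial

/-- The join `I * J` of two ideals in `K[x_1,...,x_n]`: the elimination ideal
`(I(y) + J(z) + ⟨y_i + z_i - x_i⟩) ∩ K[x]`, realized in the polynomial ring on
`Fin n ⊕ (Fin n ⊕ Fin n)` where `Sum.inl` are the `x`-variables, `Sum.inr ∘ Sum.inl`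
the `y`-variables and `Sum.inr ∘ Sum.inr` the `z`-variables. -/
noncomputable def joinIdeal {K : Type*} [Field K] {n : ℕ}
    (I J : Ideal (MvPolynomial (Fin n) K)) : Ideal (MvPolynomial (Fin n) K) :=
  Ideal.comap (rename (Sum.inl : Fin n → Fin n ⊕ (Fin n ⊕ Fin n)))
    (Ideal.map (rename (fun i : Fin n => (Sum.inr (Sum.inl i) : Fin n ⊕ (Fin n ⊕ Fin n)))) I ⊔
     Ideal.map (rename (fun i : Fin n => (Sum.inr (Sum.inr i) : Fin n ⊕ (Fin n ⊕ Fin n)))) J ⊔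
     Ideal.span {p : MvPolynomial (Fin n ⊕ (Fin n ⊕ Fin n)) K | ∃ i : Fin n,
       p = X (Sum.inr (Sum.inl i)) + X (Sum.inr (Sum.inr i)) - X (Sum.inl i)})

/-- The `r`-th secant ideal `I^{r}`, the `r`-fold join of `I` with itself.
(The `0`-th secant is the irrelevant maximal ideal `⟨x_1,...,x_n⟩`, the identity for join.) -/
noncomputable def secantIdeal {K : Type*} [Field K] {n : ℕ}
    (I : Ideal (MvPolynomial (Fin n) K)) : ℕ → Ideal (MvPolynomial (Fin n) K)
  | 0 => Ideal.span (Set.range X)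
  | 1 => I
  | (r + 2) => joinIdeal (secantIdeal I (r + 1)) I

section JoinAux
variable {K : Type*} [Field K]

lemma finsupp_fin1 (d : Fin 1 →₀ ℕ) : d = Finsupp.single 0 (d 0) := by
  refine Finsupp.ext fun a => ?_
  have ha : a = 0 := Subsingleton.elim a 0
  subst ha; simp

lemma mem_span_Xpow {N : ℕ} {p : MvPolynomial (Fin 1) K}
    (h : ∀ m < N, coeff (Finsupp.single 0 m) p = 0) :
    p ∈ Ideal.span {(X 0 : MvPolynomial (Fin 1) K) ^ N} := by
  nth_rewrite 1 [as_sum p]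
  refine Ideal.sum_mem _ (fun d hd => ?_)
  have hd0 : N ≤ d 0 := by
    by_contra hlt
    push_neg at hlt
    have h2 := h (d 0) hlt
    rw [← finsupp_fin1 d] at h2
    exact (mem_support_iff.mp hd) h2
  rw [Ideal.mem_span_singleton]
  refine ⟨monomial (d - Finsupp.single 0 N) (coeff d p), ?_⟩
  rw [X_pow_eq_monomial, monomial_mul, one_mul]
  congr 1
  rw [add_tsub_cancel_of_le]
  exact Finsupp.single_le_iff.mpr hd0

lemma coeff_add_pow' (a b m : ℕ) :
    coeff (Finsupp.single (Sum.inl 0) a + Finsupp.single (Sum.inr 0) b)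
      ((X (Sum.inl 0) + X (Sum.inr 0) : MvPolynomial (Fin 1 ⊕ Fin 1) K) ^ m)
    = if a + b = m then (m.choose a : K) else 0 := by
  rw [add_pow, coeff_sum]
  have hterm : ∀ k,
      coeff (Finsupp.single (Sum.inl 0) a + Finsupp.single (Sum.inr 0) b)
        (X (Sum.inl 0) ^ k * X (Sum.inr 0) ^ (m - k) * ((m.choose k : ℕ) : MvPolynomial (Fin 1 ⊕ Fin 1) K))
      = if k = a ∧ m - k = b then (m.choose k : K) else 0 := by
    intro k
    rw [mul_comm, ← map_natCast (C : K →+* MvPolynomial (Fin 1 ⊕ Fin 1) K), coeff_C_mul,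
      X_pow_eq_monomial, X_pow_eq_monomial, monomial_mul, one_mul, coeff_monomial]
    have heq : (Finsupp.single (Sum.inl (0:Fin 1)) k + Finsupp.single (Sum.inr (0:Fin 1)) (m - k)
        = Finsupp.single (Sum.inl 0) a + Finsupp.single (Sum.inr 0) b) ↔ (k = a ∧ m - k = b) := by
      constructor
      · intro hEq
        constructor
        · have := DFunLike.congr_fun hEq (Sum.inl 0)
          simpa using this
        · have := DFunLike.congr_fun hEq (Sum.inr 0)
          simpa using this
      · rintro ⟨rfl, h2⟩; rw [h2]
    rw [if_congr heq rfl rfl]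
    split <;> simp
  simp only [hterm]
  have hsplit : ∀ k, (if k = a ∧ m - k = b then (m.choose k : K) else 0)
      = if k = a then (if m - k = b then (m.choose k : K) else 0) else 0 := by
    intro k; by_cases h1 : k = a <;> by_cases h2 : m - k = b <;> simp [h1, h2]
  simp only [hsplit]
  rw [Finset.sum_ite_eq' (Finset.range (m+1)) a]
  by_cases hab : a + b = m
  · rw [if_pos hab, if_pos (Finset.mem_range.mpr (by omega)), if_pos (by omega)]
  · rw [if_neg hab]
    split_ifs with h1 h2
    · exfalso; rw [Finset.mem_range] at h1; omega
    · rfl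
    · rfl

lemma coeff_F (p : MvPolynomial (Fin 1) K) (a b : ℕ) :
    coeff (Finsupp.single (Sum.inl 0) a + Finsupp.single (Sum.inr 0) b)
      (aeval (fun _ : Fin 1 => (X (Sum.inl 0) + X (Sum.inr 0) : MvPolynomial (Fin 1 ⊕ Fin 1) K)) p)
    = ((a+b).choose a : K) * coeff (Finsupp.single 0 (a+b)) p := by
  conv_lhs => rw [as_sum p]
  rw [map_sum, coeff_sum]
  have hterm : ∀ d : Fin 1 →₀ ℕ,
      coeff (Finsupp.single (Sum.inl 0) a + Finsupp.single (Sum.inr 0) b)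
        (aeval (fun _ : Fin 1 => (X (Sum.inl 0) + X (Sum.inr 0) : MvPolynomial (Fin 1 ⊕ Fin 1) K)) (monomial d (coeff d p)))
      = coeff d p * (if a + b = d 0 then ((d 0).choose a : K) else 0) := by
    intro d
    rw [aeval_monomial]
    have hprod : (d.prod fun _ e => (X (Sum.inl 0) + X (Sum.inr 0) : MvPolynomial (Fin 1 ⊕ Fin 1) K) ^ e)
        = (X (Sum.inl 0) + X (Sum.inr 0)) ^ (d 0) := by
      conv_lhs => rw [finsupp_fin1 d]
      rw [Finsupp.prod_single_index]
      exact pow_zero _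
    rw [hprod]
    rw [show (algebraMap K (MvPolynomial (Fin 1 ⊕ Fin 1) K)) (coeff d p) = C (coeff d p) from rfl]
    rw [coeff_C_mul, coeff_add_pow']
  simp only [hterm]
  rw [Finset.sum_eq_single (Finsupp.single (0 : Fin 1) (a+b))]
  · simp [mul_comm]
  · intro d _ hne
    have : ¬ (a + b = d 0) := by
      intro hEq
      apply hne
      rw [finsupp_fin1 d, ← hEq]
    rw [if_neg this, mul_zero]
  · intro hns
    have : coeff (Finsupp.single (0:Fin 1) (a+b)) p = 0 := notMem_support_iff.mp hns
    rw [this, zero_mul]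

end JoinAux

/-- In characteristic zero, `⟨x^i⟩ * ⟨x^j⟩ = ⟨x^{i+j-1}⟩` for `i, j ≥ 1`. -/
theorem stmt_0 (K : Type*) [Field K] [CharZero K] (i j : ℕ) (hi : 1 ≤ i) (hj : 1 ≤ j) :
    joinIdeal (Ideal.span {(X 0 : MvPolynomial (Fin 1) K) ^ i})
      (Ideal.span {(X 0 : MvPolynomial (Fin 1) K) ^ j})
    = Ideal.span {(X 0 : MvPolynomial (Fin 1) K) ^ (i + j - 1)} := by
  classical
  set N := i + j - 1 with hN
  set S := (Fin 1 ⊕ (Fin 1 ⊕ Fin 1))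
  set x : MvPolynomial S K := X (Sum.inl 0) with hx
  set y : MvPolynomial S K := X (Sum.inr (Sum.inl 0)) with hy
  set z : MvPolynomial S K := X (Sum.inr (Sum.inr 0)) with hz
  unfold joinIdeal
  set L : Ideal (MvPolynomial S K) :=
    (Ideal.map (rename (fun i : Fin 1 => (Sum.inr (Sum.inl i) : S)))
        (Ideal.span {(X 0 : MvPolynomial (Fin 1) K) ^ i}) ⊔
     Ideal.map (rename (fun i : Fin 1 => (Sum.inr (Sum.inr i) : S)))
        (Ideal.span {(X 0 : MvPolynomial (Fin 1) K) ^ j}) ⊔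
     Ideal.span {p : MvPolynomial S K | ∃ i : Fin 1,
       p = X (Sum.inr (Sum.inl i)) + X (Sum.inr (Sum.inr i)) - X (Sum.inl i)}) with hL
  have hyL : y ^ i ∈ L := by
    apply Ideal.mem_sup_left; apply Ideal.mem_sup_left
    have : (rename (fun i : Fin 1 => (Sum.inr (Sum.inl i) : S))) ((X 0 : MvPolynomial (Fin 1) K) ^ i) = y ^ i := by
      rw [map_pow, rename_X]
    rw [← this]
    exact Ideal.mem_map_of_mem _ (Ideal.subset_span rfl)
  have hzL : z ^ j ∈ L := by
    apply Ideal.mem_sup_left; apply Ideal.mem_sup_right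
    have : (rename (fun i : Fin 1 => (Sum.inr (Sum.inr i) : S))) ((X 0 : MvPolynomial (Fin 1) K) ^ j) = z ^ j := by
      rw [map_pow, rename_X]
    rw [← this]
    exact Ideal.mem_map_of_mem _ (Ideal.subset_span rfl)
  have hwL : y + z - x ∈ L := by
    apply Ideal.mem_sup_right
    exact Ideal.subset_span ⟨0, rfl⟩
  apply le_antisymm
  · -- hard direction
    intro p hp
    rw [Ideal.mem_comap] at hp
    -- evaluation map
    set g : S → MvPolynomial (Fin 1 ⊕ Fin 1) K :=
      Sum.elim (fun _ => X (Sum.inl 0) + X (Sum.inr 0))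
        (Sum.elim (fun _ => X (Sum.inl 0)) (fun _ => X (Sum.inr 0))) with hg
    set M : Ideal (MvPolynomial (Fin 1 ⊕ Fin 1) K) :=
      Ideal.span {(X (Sum.inl 0) : MvPolynomial (Fin 1 ⊕ Fin 1) K) ^ i, (X (Sum.inr 0)) ^ j} with hM
    have hLM : L ≤ Ideal.comap (aeval g : MvPolynomial S K →ₐ[K] MvPolynomial (Fin 1 ⊕ Fin 1) K) M := by
      refine sup_le (sup_le ?_ ?_) ?_
      · rw [Ideal.map_le_iff_le_comap, Ideal.span_le]
        rintro q rfl
        simp only [SetLike.mem_coe]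
        rw [Ideal.mem_comap, Ideal.mem_comap, map_pow, rename_X, map_pow, aeval_X]
        exact Ideal.subset_span (Set.mem_insert _ _)
      · rw [Ideal.map_le_iff_le_comap, Ideal.span_le]
        rintro q rfl
        simp only [SetLike.mem_coe]
        rw [Ideal.mem_comap, Ideal.mem_comap, map_pow, rename_X, map_pow, aeval_X]
        exact Ideal.subset_span (Set.mem_insert_of_mem _ rfl)
      · rw [Ideal.span_le]
        rintro q ⟨k, rfl⟩
        simp only [SetLike.mem_coe]
        rw [Ideal.mem_comap, map_sub, map_add, aeval_X, aeval_X, aeval_X]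
        simp [hg]
    have hFp : (aeval (fun _ : Fin 1 => (X (Sum.inl 0) + X (Sum.inr 0) : MvPolynomial (Fin 1 ⊕ Fin 1) K))) p ∈ M := by
      have h1 := hLM hp
      rw [Ideal.mem_comap, aeval_rename] at h1
      exact h1
    obtain ⟨f, f', hff⟩ := Ideal.mem_span_pair.mp hFp
    apply mem_span_Xpow
    intro m hm
    set a := min m (i - 1) with ha
    set b := m - a with hb
    have hab : a + b = m := by omega
    have hai : a < i := by omega
    have hbj : b < j := by omega
    have hc := congrArg (coeff (Finsupp.single (Sum.inl 0) a + Finsupp.single (Sum.inr 0) b)) hff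
    rw [coeff_F, coeff_add] at hc
    have c1 : coeff (Finsupp.single (Sum.inl (0:Fin 1)) a + Finsupp.single (Sum.inr (0:Fin 1)) b)
        (f * X (Sum.inl 0) ^ i) = 0 := by
      rw [X_pow_eq_monomial, coeff_mul_monomial']
      rw [if_neg]
      intro hle
      have := Finsupp.single_le_iff.mp hle
      simp [Finsupp.single_apply] at this
      omega
    have c2 : coeff (Finsupp.single (Sum.inl (0:Fin 1)) a + Finsupp.single (Sum.inr (0:Fin 1)) b)
        (f' * X (Sum.inr 0) ^ j) = 0 := by
      rw [X_pow_eq_monomial, coeff_mul_monomial']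
      rw [if_neg]
      intro hle
      have := Finsupp.single_le_iff.mp hle
      simp [Finsupp.single_apply] at this
      omega
    rw [c1, c2, hab] at hc
    have hch : (m.choose a : K) ≠ 0 :=
      Nat.cast_ne_zero.mpr (Nat.choose_pos (show a ≤ m by omega)).ne'
    rw [add_zero] at hc
    exact (mul_eq_zero.mp hc.symm).resolve_left hch
  · -- easy direction
    rw [Ideal.span_le]
    rintro q rfl
    rw [SetLike.mem_coe, Ideal.mem_comap, map_pow, rename_X]
    change x ^ N ∈ L
    have h1 : (y + z) ^ N ∈ L := by
      rw [add_pow]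
      refine Ideal.sum_mem _ (fun k hk => ?_)
      rw [Finset.mem_range] at hk
      by_cases hki : i ≤ k
      · refine Ideal.mul_mem_right _ _ (Ideal.mul_mem_right _ _ ?_)
        have : y ^ k = y ^ i * y ^ (k - i) := by rw [← pow_add]; congr 1; omega
        rw [this]
        exact Ideal.mul_mem_right _ _ hyL
      · refine Ideal.mul_mem_right _ _ (Ideal.mul_mem_left _ _ ?_)
        have hkj : j ≤ N - k := by omega
        have : z ^ (N - k) = z ^ j * z ^ (N - k - j) := by rw [← pow_add]; congr 1; omega
        rw [this]
        exact Ideal.mul_mem_right _ _ hzL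
    have h2 : (y + z) ^ N - x ^ N ∈ L := by
      obtain ⟨q, hq⟩ := sub_dvd_pow_sub_pow (y + z) x N
      rw [hq]
      exact Ideal.mul_mem_right _ _ hwL
    have := Ideal.sub_mem _ h1 h2
    simpa using this
end

section
/- Let K have characteristic zero and let u, v ∈ ℕ^n. The join of the irreducible monomial ideals m^u = ⟨x_i^{u_i} : u_i > 0⟩ and m^v = ⟨x_i^{v_i} : v_i > 0⟩ is the irreducible monomial ideal m^w where w_i = u_i + v_i - 1 if both u_i > 0 and v_i > 0, and w_i = 0 otherwise. -/
open MvPolynomial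

/-- The irreducible monomial ideal `m^u = ⟨x_i^{u_i} : u_i > 0⟩`. -/
noncomputable def irredMonomialIdeal (K : Type*) [Field K] {n : ℕ} (u : Fin n → ℕ) :
    Ideal (MvPolynomial (Fin n) K) :=
  Ideal.span {p : MvPolynomial (Fin n) K | ∃ i : Fin n, 0 < u i ∧ p = X i ^ u i}

/-!
Modulo the relations `x_i = y_i + z_i`, a polynomial `f(x)` lies in the join exactly when
`f(y + z)` lies in the monomial ideal `⟨y_i^{u_i}, z_i^{v_i}⟩`. For a generator `x_i^{w_i}` this
holds because every term of `(y_i + z_i)^{u_i + v_i - 1}` has `y`-degree at least `u_i` or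
`z`-degree at least `v_i`. Conversely, if a monomial `x^c` of `f` is divisible by no `x_i^{w_i}`,
write `c = a + b` with `a_i < u_i` and `b_i < v_i`: the coefficient of `y^a z^b` in `f(y + z)` is
`f_c ∏ binom(c_i, a_i)`, which is nonzero in characteristic zero, so `f(y + z)` has a monomial
outside the monomial ideal.
-/

lemma MvPolynomial.mem_span_X_pow_iff {σ ι R : Type*} [CommSemiring R] (t : ι → σ) (e : ι → ℕ)
    (p : MvPolynomial σ R) :
    p ∈ Ideal.span {q | ∃ i, 0 < e i ∧ q = X (t i) ^ e i} ↔
      ∀ d ∈ p.support, ∃ i, 0 < e i ∧ e i ≤ d (t i) := by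
  have hgen : {q : MvPolynomial σ R | ∃ i, 0 < e i ∧ q = X (t i) ^ e i} =
      (fun s => monomial s 1) '' {s | ∃ i, 0 < e i ∧ s = Finsupp.single (t i) (e i)} := by
    ext q
    simp [X_pow_eq_monomial, eq_comm]
  rw [hgen, mem_ideal_span_monomial_image]
  simp [Finsupp.single_le_iff]

lemma Nat.exists_add_eq_of_lt_add {u v c : ℕ} (h : 0 < u → 0 < v → c + 1 < u + v) :
    ∃ a b, a + b = c ∧ (0 < u → a < u) ∧ (0 < v → b < v) := by
  rcases Nat.eq_zero_or_pos u with hu | hu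
  · exact ⟨c, 0, by omega⟩
  · exact ⟨min c (u - 1), c - min c (u - 1), by omega⟩

namespace JoinIdeal

variable {K : Type*} [Field K] {n : ℕ}

noncomputable def diagSubst :
    MvPolynomial (Fin n) K →ₐ[K] MvPolynomial (Fin n ⊕ (Fin n ⊕ Fin n)) K :=
  aeval fun i => X (.inr (.inl i)) + X (.inr (.inr i))

/-- Substituting `x_i ↦ y_i + z_i` and fixing `y, z` is the identity modulo `diagIdeal` and
kills it, so it computes the elimination in the definition of `joinIdeal`. -/
noncomputable def retraction :
    MvPolynomial (Fin n ⊕ (Fin n ⊕ Fin n)) K →ₐ[K] MvPolynomial (Fin n ⊕ (Fin n ⊕ Fin n)) K :=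
  aeval (Sum.elim (fun i => X (.inr (.inl i)) + X (.inr (.inr i))) (X ∘ .inr))

noncomputable def diagIdeal : Ideal (MvPolynomial (Fin n ⊕ (Fin n ⊕ Fin n)) K) :=
  Ideal.span {p | ∃ i : Fin n, p = X (.inr (.inl i)) + X (.inr (.inr i)) - X (.inl i)}

lemma retraction_comp_rename_inr (ρ : Fin n → Fin n ⊕ Fin n) :
    (retraction (K := K)).comp (rename fun i => .inr (ρ i)) = rename fun i => .inr (ρ i) := by
  ext; simp [retraction]

lemma map_retraction_map_rename_inr (ρ : Fin n → Fin n ⊕ Fin n)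
    (I : Ideal (MvPolynomial (Fin n) K)) :
    (I.map (rename fun i => .inr (ρ i))).map retraction = I.map (rename fun i => .inr (ρ i)) := by
  conv_rhs => rw [← retraction_comp_rename_inr]
  exact Ideal.map_map (rename _).toRingHom retraction.toRingHom

lemma retraction_comp_rename_inl :
    (retraction (K := K) (n := n)).comp (rename .inl) = diagSubst := by
  ext; simp [retraction, diagSubst]

lemma sub_retraction_mem_diagIdeal (g : MvPolynomial (Fin n ⊕ (Fin n ⊕ Fin n)) K) :
    g - retraction g ∈ diagIdeal := by
  suffices (Ideal.Quotient.mkₐ K diagIdeal).comp retraction = Ideal.Quotient.mkₐ K diagIdeal by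
    rw [← Ideal.Quotient.mk_eq_mk_iff_sub_mem]
    exact (AlgHom.congr_fun this g).symm
  ext (i | j)
  · simp only [AlgHom.comp_apply, Ideal.Quotient.mkₐ_eq_mk, retraction, aeval_X, Sum.elim_inl]
    rw [Ideal.Quotient.mk_eq_mk_iff_sub_mem]
    exact Ideal.subset_span ⟨i, rfl⟩
  · simp [retraction]

lemma map_retraction_diagIdeal :
    diagIdeal.map (retraction (K := K) (n := n)) = ⊥ := by
  rw [diagIdeal, Ideal.map_span, Ideal.span_eq_bot]
  rintro _ ⟨_, ⟨i, rfl⟩, rfl⟩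
  simp [retraction]

lemma mem_sup_diagIdeal_iff {N : Ideal (MvPolynomial (Fin n ⊕ (Fin n ⊕ Fin n)) K)}
    (hN : N.map retraction ≤ N) (g : MvPolynomial (Fin n ⊕ (Fin n ⊕ Fin n)) K) :
    g ∈ N ⊔ diagIdeal ↔ retraction g ∈ N := by
  constructor
  · intro hg
    have := Ideal.mem_map_of_mem retraction hg
    rw [Ideal.map_sup, map_retraction_diagIdeal, sup_bot_eq] at this
    exact hN this
  · intro hg
    rw [← add_sub_cancel (retraction g) g]
    exact Ideal.add_mem _ (Ideal.mem_sup_left hg)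
      (Ideal.mem_sup_right (sub_retraction_mem_diagIdeal g))

theorem mem_joinIdeal_iff (I J : Ideal (MvPolynomial (Fin n) K)) (f : MvPolynomial (Fin n) K) :
    f ∈ joinIdeal I J ↔ diagSubst f ∈ I.map (rename fun i => .inr (.inl i)) ⊔
      J.map (rename fun i => (.inr (.inr i) : Fin n ⊕ (Fin n ⊕ Fin n))) := by
  set N := I.map (rename fun i => .inr (.inl i)) ⊔
    J.map (rename fun i => (.inr (.inr i) : Fin n ⊕ (Fin n ⊕ Fin n)))
  have hN : N.map (retraction (K := K)) ≤ N := by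
    simp only [N, Ideal.map_sup, map_retraction_map_rename_inr, le_refl]
  rw [joinIdeal, Ideal.mem_comap, ← diagIdeal, mem_sup_diagIdeal_iff hN,
    ← retraction_comp_rename_inl, AlgHom.comp_apply]

/-- The exponent of `y^a z^b`. -/
noncomputable def pairExp (a b : Fin n → ℕ) : Fin n ⊕ (Fin n ⊕ Fin n) →₀ ℕ :=
  Finsupp.equivFunOnFinite.symm (Sum.elim (0 : Fin n → ℕ) (Sum.elim a b))

@[simp] lemma pairExp_apply (a b : Fin n → ℕ) (t : Fin n ⊕ (Fin n ⊕ Fin n)) :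
    pairExp a b t = Sum.elim (0 : Fin n → ℕ) (Sum.elim a b) t := rfl

lemma pairExp_inj {a b a' b' : Fin n → ℕ} : pairExp a b = pairExp a' b' ↔ a = a' ∧ b = b' := by
  simp [pairExp, Sum.elim_eq_iff]

lemma monomial_pairExp (a b : Fin n → ℕ) (r : K) :
    monomial (pairExp a b) r = C r * ∏ i, X (.inr (.inl i)) ^ a i * X (.inr (.inr i)) ^ b i := by
  rw [monomial_eq, Finsupp.prod_fintype _ _ (fun _ => pow_zero _), Fintype.prod_sum_type,
    Fintype.prod_sum_type, Finset.prod_mul_distrib]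
  simp

lemma coeff_pairExp_prod_add_pow (a b c : Fin n → ℕ) :
    coeff (pairExp a b) (∏ i, (X (.inr (.inl i)) + X (.inr (.inr i))) ^ c i : MvPolynomial _ K) =
      if a + b = c then ∏ i, ((c i).choose (a i) : K) else 0 := by
  classical
  have expand : ∏ i, (X (.inr (.inl i)) + X (.inr (.inr i))) ^ c i =
      ∑ m ∈ Fintype.piFinset fun i => Finset.range (c i + 1),
        monomial (pairExp m (c - m)) (∏ i, ((c i).choose (m i) : K)) := by
    simp_rw [add_pow, Finset.prod_univ_sum, monomial_pairExp, map_prod, ← Finset.prod_mul_distrib]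
    refine Finset.sum_congr rfl fun m _ => Finset.prod_congr rfl fun i _ => ?_
    simp only [Pi.sub_apply, map_natCast]
    ring
  rw [expand, coeff_sum]
  simp only [coeff_monomial, pairExp_inj]
  split_ifs with hc
  · subst hc
    rw [Finset.sum_eq_single a (fun m _ hm => if_neg (hm ·.1)) (fun ha => (ha (by simp)).elim)]
    simp
  · refine Finset.sum_eq_zero fun m hm => if_neg ?_
    rintro ⟨rfl, rfl⟩
    simp only [Fintype.mem_piFinset, Finset.mem_range] at hm
    exact hc (funext fun i => by have := hm i; simp only [Pi.add_apply, Pi.sub_apply]; omega)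

lemma diagSubst_monomial (c : Fin n →₀ ℕ) (r : K) :
    diagSubst (monomial c r) = C r * ∏ i, (X (.inr (.inl i)) + X (.inr (.inr i))) ^ c i := by
  rw [diagSubst, aeval_monomial, Finsupp.prod_fintype _ _ (fun _ => pow_zero _)]
  rfl

lemma coeff_pairExp_diagSubst (f : MvPolynomial (Fin n) K) {c : Fin n →₀ ℕ} {a b : Fin n → ℕ}
    (hc : a + b = c) :
    coeff (pairExp a b) (diagSubst f) = coeff c f * ∏ i, ((c i).choose (a i) : K) := by
  conv_lhs => rw [f.as_sum, map_sum, coeff_sum]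
  simp only [diagSubst_monomial, coeff_C_mul, coeff_pairExp_prod_add_pow]
  rw [Finset.sum_eq_single c, if_pos hc]
  · intro c' _ hc'
    rw [if_neg fun h => hc' (DFunLike.coe_injective (h.symm.trans hc)), mul_zero]
  · intro hc'
    rw [notMem_support_iff.1 hc', zero_mul]

lemma sup_map_rename_irredMonomialIdeal (u v : Fin n → ℕ) :
    (irredMonomialIdeal K u).map (rename fun i => .inr (.inl i)) ⊔
      (irredMonomialIdeal K v).map (rename fun i => (.inr (.inr i) : Fin n ⊕ (Fin n ⊕ Fin n))) =
    Ideal.span {q | ∃ j, 0 < Sum.elim u v j ∧ q = X (.inr j) ^ Sum.elim u v j} := by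
  rw [irredMonomialIdeal, irredMonomialIdeal, Ideal.map_span, Ideal.map_span, ← Ideal.span_union]
  congr 1
  ext q
  simp [Sum.exists, eq_comm]

lemma irredMonomialIdeal_le_comap_diagSubst (u v : Fin n → ℕ) :
    irredMonomialIdeal K (fun i => if 0 < u i ∧ 0 < v i then u i + v i - 1 else 0) ≤
      (Ideal.span {q | ∃ j, 0 < Sum.elim u v j ∧ q = X (.inr j) ^ Sum.elim u v j}).comap
        diagSubst := by
  rw [irredMonomialIdeal, Ideal.span_le]
  rintro _ ⟨i, hw, rfl⟩
  have huv : 0 < u i ∧ 0 < v i := by by_contra h; simp [h] at hw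
  simp only [if_pos huv, SetLike.mem_coe, Ideal.mem_comap, map_pow, diagSubst, aeval_X]
  exact Ideal.add_pow_add_pred_mem_of_pow_mem _ (Ideal.subset_span ⟨.inl i, huv.1, rfl⟩)
    (Ideal.subset_span ⟨.inr i, huv.2, rfl⟩)

theorem mem_irredMonomialIdeal_of_diagSubst_mem [CharZero K] {u v : Fin n → ℕ}
    {f : MvPolynomial (Fin n) K}
    (hf : diagSubst f ∈
      Ideal.span {q | ∃ j, 0 < Sum.elim u v j ∧ q = X (.inr j) ^ Sum.elim u v j}) :
    f ∈ irredMonomialIdeal K (fun i => if 0 < u i ∧ 0 < v i then u i + v i - 1 else 0) := by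
  rw [irredMonomialIdeal, mem_span_X_pow_iff]
  rw [mem_span_X_pow_iff] at hf
  by_contra! hc
  obtain ⟨c, hc, hcw⟩ := hc
  have hsplit : ∀ i, 0 < u i → 0 < v i → c i + 1 < u i + v i := fun i hu hv => by
    have := hcw i
    simp only [hu, hv, and_self, if_true] at this
    omega
  choose a b hab hau hbv using fun i => Nat.exists_add_eq_of_lt_add (hsplit i)
  obtain ⟨j, hj, hle⟩ := hf (pairExp a b) <| mem_support_iff.2 <| by
    rw [coeff_pairExp_diagSubst f (funext hab)]
    refine mul_ne_zero (mem_support_iff.1 hc) (Finset.prod_ne_zero_iff.2 fun i _ => ?_)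
    exact Nat.cast_ne_zero.2 (Nat.choose_pos (hab i ▸ Nat.le_add_right _ _)).ne'
  rcases j with i | i
  · exact absurd hle (not_le.2 (hau i hj))
  · exact absurd hle (not_le.2 (hbv i hj))

end JoinIdeal

/-- in characteristic zero, `m^u * m^v = m^w` where
`w_i = u_i + v_i - 1` if `u_i > 0` and `v_i > 0`, and `w_i = 0` otherwise. -/
theorem stmt_1 (K : Type*) [Field K] [CharZero K] (n : ℕ) (u v : Fin n → ℕ) :
    joinIdeal (irredMonomialIdeal K u) (irredMonomialIdeal K v)
      = irredMonomialIdeal K (fun i => if 0 < u i ∧ 0 < v i then u i + v i - 1 else 0) := by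
  ext f
  rw [JoinIdeal.mem_joinIdeal_iff, JoinIdeal.sup_map_rename_irredMonomialIdeal]
  exact ⟨JoinIdeal.mem_irredMonomialIdeal_of_diagSubst_mem,
    (JoinIdeal.irredMonomialIdeal_le_comap_diagSubst u v ·)⟩
end

section
/- The join operation on ideals distributes over intersection: for ideals I, J, K in a polynomial ring, (I ∩ J) * K = (I * K) ∩ (J * K). -/
/-!
Writing `A = K[z]/L`, the join `I * L` consists of the `f` with `f(y + z) ∈ I(y) + L(z)`, and
`I(y) + L(z)` is the preimage in `K[y, z]` of the extension `I · A[y]` of `I` along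
`K[y] → A[y]`. Since `A` is free over `K`, an element of `A[y]` lies in `I · A[y]` iff each of
its coordinates along a `K`-basis of `A` lies in `I`; hence extension commutes with intersection,
and so do the two preimages.
-/

open MvPolynomial

namespace MvPolynomial
variable {R A σ : Type*} [CommRing R] [CommRing A] [Algebra R A]

noncomputable def mapCoeffs (φ : A →ₗ[R] R) : MvPolynomial σ A →ₗ[R] MvPolynomial σ R :=
  (AddMonoidAlgebra.coeffLinearEquiv R).symm.toLinearMap ∘ₗ Finsupp.mapRange.linearMap φ ∘ₗ
    (AddMonoidAlgebra.coeffLinearEquiv R).toLinearMap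

@[simp]
lemma coeff_mapCoeffs (φ : A →ₗ[R] R) (p : MvPolynomial σ A) (m : σ →₀ ℕ) :
    coeff m (mapCoeffs φ p) = φ (coeff m p) := rfl

lemma mapCoeffs_mul_map_algebraMap (φ : A →ₗ[R] R) (p : MvPolynomial σ A)
    (r : MvPolynomial σ R) :
    mapCoeffs φ (p * map (algebraMap R A) r) = mapCoeffs φ p * r := by
  classical
  ext m
  rw [coeff_mapCoeffs, coeff_mul, coeff_mul, map_sum]
  refine Finset.sum_congr rfl fun x _ => ?_
  rw [coeff_map, coeff_mapCoeffs, mul_comm, ← Algebra.smul_def, map_smul, smul_eq_mul, mul_comm]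

lemma exists_eq_sum_C_basis_mul {ι : Type*} (b : Module.Basis ι R A) (p : MvPolynomial σ A) :
    ∃ s : Finset ι,
      p = ∑ j ∈ s, C (b j) * map (algebraMap R A) (mapCoeffs (b.coord j) p) := by
  classical
  refine ⟨p.support.biUnion fun m => (b.repr (coeff m p)).support, ?_⟩
  ext m
  have hsupp : (b.repr (coeff m p)).support ⊆
      p.support.biUnion fun m => (b.repr (coeff m p)).support := by
    by_cases hm : m ∈ p.support
    · exact Finset.subset_biUnion_of_mem (fun m => (b.repr (coeff m p)).support) hm
    · simp [notMem_support_iff.mp hm]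
  simp only [coeff_sum, coeff_C_mul, coeff_map, coeff_mapCoeffs, Module.Basis.coord_apply]
  conv_lhs => rw [← b.linearCombination_repr (coeff m p), Finsupp.linearCombination_apply,
    Finsupp.sum_of_support_subset _ hsupp (fun i a => a • b i) (fun _ _ => zero_smul R _)]
  exact Finset.sum_congr rfl fun j _ => by rw [Algebra.smul_def, mul_comm]

theorem mem_map_map_algebraMap_iff {ι : Type*} (b : Module.Basis ι R A)
    (I : Ideal (MvPolynomial σ R)) (p : MvPolynomial σ A) :
    p ∈ I.map (map (algebraMap R A)) ↔ ∀ j, mapCoeffs (b.coord j) p ∈ I := by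
  constructor
  · intro hp j
    obtain ⟨t, ht, c, rfl⟩ := (Submodule.mem_span_image_iff_exists_fun _).mp hp
    simp only [smul_eq_mul, map_sum, mapCoeffs_mul_map_algebraMap]
    exact I.sum_mem fun i _ => I.mul_mem_left _ (ht i.2)
  · intro h
    obtain ⟨s, hs⟩ := exists_eq_sum_C_basis_mul b p
    rw [hs]
    exact Ideal.sum_mem _ fun j _ => Ideal.mul_mem_left _ _ (Ideal.mem_map_of_mem _ (h j))

theorem map_map_algebraMap_inf [Module.Free R A] (I J : Ideal (MvPolynomial σ R)) :
    (I ⊓ J).map (map (algebraMap R A)) =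
      I.map (map (algebraMap R A)) ⊓ J.map (map (algebraMap R A)) := by
  ext p
  simp only [Submodule.mem_inf, mem_map_map_algebraMap_iff (Module.Free.chooseBasis R A),
    ← forall_and]

section QuotientCoeffs
variable {τ : Type*} (L : Ideal (MvPolynomial τ R))

noncomputable def sumToQuotient :
    MvPolynomial (σ ⊕ τ) R →ₐ[R] MvPolynomial σ (MvPolynomial τ R ⧸ L) :=
  (mapAlgHom (Ideal.Quotient.mkₐ R L)).comp (sumAlgEquiv R σ τ).toAlgHom

lemma sumToQuotient_surjective : Function.Surjective (sumToQuotient (σ := σ) L) :=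
  (map_surjective _ Ideal.Quotient.mk_surjective).comp (sumAlgEquiv R σ τ).surjective

lemma ker_sumToQuotient :
    RingHom.ker (sumToQuotient (σ := σ) L) = L.map (rename Sum.inr) := by
  have hC : (L.map (rename (R := R) (Sum.inr : τ → σ ⊕ τ))).map (sumAlgEquiv R σ τ).toAlgHom =
      L.map (C : MvPolynomial τ R →+* MvPolynomial σ (MvPolynomial τ R)) := by
    rw [Ideal.map_mapₐ, sumAlgEquiv_comp_rename_inr]
    rfl
  ext p
  rw [RingHom.mem_ker, sumToQuotient, AlgHom.comp_apply, ← RingHom.mem_ker, ker_mapAlgHom,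
    ← RingHom.ker_coe_toRingHom, Ideal.Quotient.mkₐ_ker, ← hC, ← Ideal.mem_comap,
    Ideal.comap_map_of_bijective (sumAlgEquiv R σ τ).toAlgHom (sumAlgEquiv R σ τ).bijective]

lemma sumToQuotient_comp_rename_inl :
    (sumToQuotient L).comp (rename (R := R) (Sum.inl : σ → σ ⊕ τ)) =
      mapAlgHom (Algebra.ofId R (MvPolynomial τ R ⧸ L)) := by
  ext; simp [sumToQuotient]

theorem comap_sumToQuotient_map (I : Ideal (MvPolynomial σ R)) :
    (I.map (map (algebraMap R (MvPolynomial τ R ⧸ L)))).comap (sumToQuotient L) =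
      I.map (rename Sum.inl) ⊔ L.map (rename Sum.inr) := by
  rw [← ker_sumToQuotient, ← Ideal.comap_map_of_surjective' _ (sumToQuotient_surjective L),
    Ideal.map_mapₐ, sumToQuotient_comp_rename_inl]
  rfl

theorem map_rename_inl_inf_sup [Module.Free R (MvPolynomial τ R ⧸ L)]
    (I J : Ideal (MvPolynomial σ R)) :
    (I ⊓ J).map (rename Sum.inl) ⊔ L.map (rename Sum.inr) =
      (I.map (rename Sum.inl) ⊔ L.map (rename Sum.inr)) ⊓
        (J.map (rename Sum.inl) ⊔ L.map (rename Sum.inr)) := by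
  simp only [← comap_sumToQuotient_map, map_map_algebraMap_inf, Ideal.comap_inf]

end QuotientCoeffs

theorem ker_aeval_sumElim_le {τ : Type*} (g : σ → MvPolynomial τ R) :
    RingHom.ker (aeval (Sum.elim g X) : MvPolynomial (σ ⊕ τ) R →ₐ[R] MvPolynomial τ R) ≤
      Ideal.span (Set.range fun s => rename Sum.inr (g s) - X (Sum.inl s)) := by
  intro f hf
  -- modulo `S` every `X (inl s)` is congruent to `g s`, so `f ≡ rename inr (aeval _ f) = 0`
  set S := Ideal.span (Set.range fun s => rename (R := R) Sum.inr (g s) - X (Sum.inl s))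
  have hS : (Ideal.Quotient.mkₐ R S).comp ((rename Sum.inr).comp (aeval (Sum.elim g X))) =
      Ideal.Quotient.mkₐ R S := by
    ext (s | t)
    · simpa using Ideal.Quotient.eq.mpr (Ideal.subset_span ⟨s, rfl⟩ : _ ∈ S)
    · simp
  rw [← Ideal.Quotient.eq_zero_iff_mem, ← Ideal.Quotient.mkₐ_eq_mk R, ← hS, AlgHom.comp_apply,
    AlgHom.comp_apply, RingHom.mem_ker.mp hf, map_zero, map_zero]

end MvPolynomial

theorem joinIdeal_eq_comap {K : Type*} [Field K] {n : ℕ} (I L : Ideal (MvPolynomial (Fin n) K)) :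
    joinIdeal I L = (I.map (rename Sum.inl) ⊔ L.map (rename Sum.inr)).comap
      (aeval fun i => X (Sum.inl i) + X (Sum.inr i) :
        MvPolynomial (Fin n) K →ₐ[K] MvPolynomial (Fin n ⊕ Fin n) K) := by
  set g : Fin n → MvPolynomial (Fin n ⊕ Fin n) K := fun i => X (Sum.inl i) + X (Sum.inr i)
  set ψ : MvPolynomial (Fin n ⊕ (Fin n ⊕ Fin n)) K →ₐ[K] MvPolynomial (Fin n ⊕ Fin n) K :=
    aeval (Sum.elim g X)
  set rel := Ideal.span {p : MvPolynomial (Fin n ⊕ (Fin n ⊕ Fin n)) K | ∃ i : Fin n,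
    p = X (Sum.inr (Sum.inl i)) + X (Sum.inr (Sum.inr i)) - X (Sum.inl i)}
  set N := I.map (rename fun i => Sum.inr (Sum.inl i)) ⊔
    L.map (rename fun i => Sum.inr (Sum.inr i)) ⊔ rel
  have hsurj : Function.Surjective ψ := fun q =>
    ⟨rename Sum.inr q, by rw [aeval_rename, Sum.elim_comp_inr, aeval_X_left_apply]⟩
  have hker : RingHom.ker ψ ≤ N := by
    refine (ker_aeval_sumElim_le g).trans (le_of_eq_of_le ?_ le_sup_right)
    congr 1
    ext p
    simp [g, eq_comm]
  have hrel : rel.map ψ = ⊥ := by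
    rw [Ideal.map_span, Ideal.span_eq_bot]
    rintro _ ⟨_, ⟨i, rfl⟩, rfl⟩
    simp [ψ, g]
  have hmap : N.map ψ = I.map (rename Sum.inl) ⊔ L.map (rename Sum.inr) := by
    rw [Ideal.map_sup, Ideal.map_sup, hrel, sup_bot_eq, Ideal.map_mapₐ, Ideal.map_mapₐ]
    congr 2 <;> ext <;> simp [ψ]
  calc joinIdeal I L = N.comap (rename Sum.inl) := rfl
    _ = ((N.map ψ).comap ψ).comap (rename Sum.inl) := by
      rw [Ideal.comap_map_of_surjective' _ hsurj, sup_eq_left.mpr hker]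
    _ = _ := by
      rw [hmap, Ideal.comap_comapₐ]
      congr 1
      ext
      simp [ψ, g]

/-- the join distributes over intersection: `(I ∩ J) * L = (I * L) ∩ (J * L)`. -/
theorem stmt_2 (K : Type*) [Field K] (n : ℕ) (I J L : Ideal (MvPolynomial (Fin n) K)) :
    joinIdeal (I ⊓ J) L = joinIdeal I L ⊓ joinIdeal J L := by
  simp only [joinIdeal_eq_comap, ← Ideal.comap_inf, map_rename_inl_inf_sup]
end

section
/- If I and J are monomial ideals in K[x_1,...,x_n], then their join I*J is a monomial ideal. -/
open MvPolynomial

/-- An ideal of `K[x_1,...,x_n]` is a monomial ideal if it is generated by monomials. -/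
def IsMonomialIdeal {K : Type*} [Field K] {n : ℕ} (I : Ideal (MvPolynomial (Fin n) K)) : Prop :=
  ∃ S : Set (Fin n →₀ ℕ), I = Ideal.span ((fun m => monomial m (1 : K)) '' S)

/-!
Give each of `x_i`, `y_i`, `z_i` the multidegree `e_i ∈ ℕⁿ`. Renamed monomials and the linear
forms `y_i + z_i - x_i` are then homogeneous, so the ideal being eliminated is homogeneous. On
the copy of `K[x]` each multidegree is carried by a single monomial, so the contraction contains
every term of each of its elements, hence is a monomial ideal.
-/

attribute [local instance] MvPolynomial.weightedGradedAlgebra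

theorem Finsupp.weight_single_one_eq_mapDomain {σ τ : Type*} (π : τ → σ) (m : τ →₀ ℕ) :
    weight (fun t => single (π t) 1) m = m.mapDomain π := by
  simp [weight_apply, mapDomain, smul_single]

namespace MvPolynomial

variable {σ τ R : Type*} [CommSemiring R] {f : σ → τ} {π : τ → σ}

theorem isWeightedHomogeneous_rename_monomial (h : Function.LeftInverse π f)
    (a : σ →₀ ℕ) (r : R) :
    IsWeightedHomogeneous (fun t => Finsupp.single (π t) 1) (rename f (monomial a r)) a := by
  rw [rename_monomial]
  apply isWeightedHomogeneous_monomial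
  rw [Finsupp.weight_single_one_eq_mapDomain, ← Finsupp.mapDomain_comp, h.comp_eq_id,
    Finsupp.mapDomain_id]

theorem weightedHomogeneousComponent_rename (h : Function.LeftInverse π f)
    (p : MvPolynomial σ R) (d : σ →₀ ℕ) :
    weightedHomogeneousComponent (fun t => Finsupp.single (π t) 1) d (rename f p) =
      rename f (monomial d (coeff d p)) := by
  conv_lhs => rw [p.as_sum]
  rw [map_sum, map_sum, Finset.sum_eq_single d]
  · exact (isWeightedHomogeneous_rename_monomial h d _).weightedHomogeneousComponent_same
  · intro a _ had
    exact (isWeightedHomogeneous_rename_monomial h a _).weightedHomogeneousComponent_ne d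
      (Ne.symm had)
  · intro hd
    rw [notMem_support_iff.mp hd, monomial_zero, map_zero, map_zero]

variable [DecidableEq σ]

theorem monomial_coeff_mem_comap_rename (h : Function.LeftInverse π f)
    {L : Ideal (MvPolynomial τ R)}
    (hL : L.IsHomogeneous (weightedHomogeneousSubmodule R fun t => Finsupp.single (π t) 1))
    {p : MvPolynomial σ R} (hp : p ∈ L.comap (rename f)) (d : σ →₀ ℕ) :
    monomial d (coeff d p) ∈ L.comap (rename f) := by
  rw [Ideal.mem_comap, ← weightedHomogeneousComponent_rename h]
  exact weightedHomogeneousComponent_mem_of_mem R _ hL hp d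

theorem isHomogeneous_map_rename_span_monomial (h : Function.LeftInverse π f)
    (S : Set (σ →₀ ℕ)) :
    (Ideal.map (rename f) (Ideal.span ((fun a => monomial a (1 : R)) '' S))).IsHomogeneous
      (weightedHomogeneousSubmodule R fun t => Finsupp.single (π t) 1) := by
  rw [Ideal.map_span]
  apply Ideal.homogeneous_span
  rintro _ ⟨_, ⟨a, -, rfl⟩, rfl⟩
  exact ⟨a, isWeightedHomogeneous_rename_monomial h a 1⟩

end MvPolynomial

theorem isMonomialIdeal_of_monomial_coeff_mem {K : Type*} [Field K] {n : ℕ}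
    {P : Ideal (MvPolynomial (Fin n) K)} (h : ∀ p ∈ P, ∀ d, monomial d (coeff d p) ∈ P) :
    IsMonomialIdeal P := by
  refine ⟨{d | monomial d 1 ∈ P}, le_antisymm (fun p hp => ?_) ?_⟩
  · rw [p.as_sum]
    refine Ideal.sum_mem _ fun d hd => ?_
    have hunit : monomial d (1 : K) ∈ P := by
      simpa [C_mul_monomial, inv_mul_cancel₀ (mem_support_iff.mp hd)] using
        P.mul_mem_left (C (coeff d p)⁻¹) (h p hp d)
    rw [← mul_one (coeff d p), ← C_mul_monomial]
    exact Ideal.mul_mem_left _ _ (Ideal.subset_span ⟨d, hunit, rfl⟩)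
  · rw [Ideal.span_le]
    rintro _ ⟨d, hd, rfl⟩
    exact hd

theorem isHomogeneous_span_joinRelations (K : Type*) [CommRing K] (n : ℕ) :
    (Ideal.span {p : MvPolynomial (Fin n ⊕ (Fin n ⊕ Fin n)) K | ∃ i : Fin n,
       p = X (Sum.inr (Sum.inl i)) + X (Sum.inr (Sum.inr i)) - X (Sum.inl i)}).IsHomogeneous
      (weightedHomogeneousSubmodule K fun t =>
        Finsupp.single (Sum.elim id (Sum.elim id id) t) 1) := by
  apply Ideal.homogeneous_span
  rintro _ ⟨i, rfl⟩
  exact ⟨Finsupp.single i 1, sub_mem (add_mem (isWeightedHomogeneous_X K _ _)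
    (isWeightedHomogeneous_X K _ _)) (isWeightedHomogeneous_X K _ _)⟩

/-- the join of two monomial ideals is a monomial ideal. -/
theorem stmt_3 (K : Type*) [Field K] (n : ℕ) (I J : Ideal (MvPolynomial (Fin n) K))
    (hI : IsMonomialIdeal I) (hJ : IsMonomialIdeal J) :
    IsMonomialIdeal (joinIdeal I J) := by
  obtain ⟨S, rfl⟩ := hI
  obtain ⟨T, rfl⟩ := hJ
  refine isMonomialIdeal_of_monomial_coeff_mem fun p hp d =>
    monomial_coeff_mem_comap_rename (π := Sum.elim id (Sum.elim id id)) (fun _ => rfl) ?_ hp d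
  exact ((isHomogeneous_map_rename_span_monomial (fun _ => rfl) S).sup
    (isHomogeneous_map_rename_span_monomial (fun _ => rfl) T)).sup
    (isHomogeneous_span_joinRelations K n)
end

section
/- Let Δ be a simplicial complex on vertex set [n] with Stanley–Reisner ideal I_Δ over a field of characteristic zero, and let Δ^{r} be the simplicial complex whose faces are the unions of r faces of Δ. Then the r-th secant ideal I_Δ^{{r}} = I_Δ * ⋯ * I_Δ (r-fold join) equals the Stanley–Reisner ideal of Δ^{r}. -/
/-!
The join `I * J` is the preimage of `I(y) + J(z)` under the substitution `x ↦ y + z`: modulo the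
relations `x = y + z`, every polynomial in `x, y, z` is congruent to one in `y, z` alone.

For Stanley–Reisner ideals `I = I_Δ'`, `J = I_Δ`, the substitution sends `∏_{i ∈ V} x_i` to
`∑_{A ⊆ V} y^A z^(V \ A)`, and each term lies in `I(y) + J(z)` unless `A ∈ Δ'` and `V \ A ∈ Δ`;
so `I_{Δ' ⊻ Δ} ⊆ I * J`. Conversely, let `p ∈ I * J` and let `x^a` have support `F ∪ G` with
`F ∈ Δ'`, `G ∈ Δ` disjoint. The map `y_i ↦ [i ∈ F] x_i`, `z_i ↦ [i ∈ G] x_i` kills `I(y) + J(z)`,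
and composed with the substitution it only sets the variables outside `F ∪ G` to zero, which
keeps the coefficient of `x^a`. Hence every monomial of `p` has a non-face of `Δ' ⊻ Δ` as
support, and `p ∈ I_{Δ' ⊻ Δ}`. Since `Δ^{r+1} = Δ^{r} ⊻ Δ`, induction on `r` gives the theorem.
-/

open MvPolynomial

/-- The Stanley–Reisner ideal of a family `Δ` of subsets of `[n]`: generated by the
squarefree monomials `∏_{i ∈ V} x_i` for `V ∉ Δ`. -/
noncomputable def srIdeal (K : Type*) [Field K] {n : ℕ} (Δ : Set (Finset (Fin n))) :
    Ideal (MvPolynomial (Fin n) K) :=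
  Ideal.span {p : MvPolynomial (Fin n) K | ∃ V : Finset (Fin n), V ∉ Δ ∧ p = ∏ i ∈ V, X i}

open scoped SetFamily

namespace MvPolynomial

section CommSemiring

variable {R σ : Type*} [CommSemiring R]

theorem prod_X_dvd_monomial (a : σ →₀ ℕ) (c : R) :
    ∏ i ∈ a.support, X i ∣ monomial a c := by
  rw [monomial_eq, Finsupp.prod]
  exact Dvd.dvd.mul_left
    (Finset.prod_dvd_prod_of_dvd _ _ fun i hi => dvd_pow_self _ (Finsupp.mem_support_iff.1 hi)) _

noncomputable def joinMap (R σ : Type*) [CommSemiring R] :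
    MvPolynomial σ R →ₐ[R] MvPolynomial (σ ⊕ σ) R :=
  aeval fun i => X (Sum.inl i) + X (Sum.inr i)

section KillOutside

variable [DecidableEq σ]

noncomputable def killOutside (H : Finset σ) : MvPolynomial σ R →ₐ[R] MvPolynomial σ R :=
  aeval fun i => if i ∈ H then X i else 0

theorem killOutside_monomial (H : Finset σ) (a : σ →₀ ℕ) (c : R) :
    killOutside H (monomial a c) = if a.support ⊆ H then monomial a c else 0 := by
  rw [killOutside, aeval_monomial, Finsupp.prod]
  split_ifs with ha
  · rw [monomial_eq, Finsupp.prod, algebraMap_eq]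
    congr 1
    exact Finset.prod_congr rfl fun i hi => by rw [if_pos (ha hi)]
  · obtain ⟨i, hia, hiH⟩ := Finset.not_subset.1 ha
    refine mul_eq_zero_of_right _ (Finset.prod_eq_zero hia ?_)
    rw [if_neg hiH, zero_pow (Finsupp.mem_support_iff.1 hia)]

theorem coeff_killOutside_of_support_subset {H : Finset σ} {a : σ →₀ ℕ} (ha : a.support ⊆ H)
    (p : MvPolynomial σ R) : coeff a (killOutside H p) = coeff a p := by
  induction p using induction_on' with
  | monomial b c =>
    rw [killOutside_monomial]
    split_ifs with hb
    · rfl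
    · rw [coeff_zero, coeff_monomial, if_neg]
      rintro rfl
      exact hb ha
  | add p q hp hq => rw [map_add, coeff_add, coeff_add, hp, hq]

end KillOutside

end CommSemiring

variable {R σ τ : Type*} [CommRing R]

theorem algHom_sub_mem_of_X_sub_mem {A : Type*} [CommRing A] [Algebra R A]
    (f g : MvPolynomial σ R →ₐ[R] A) (P : Ideal A) (hX : ∀ i, f (X i) - g (X i) ∈ P)
    (p : MvPolynomial σ R) : f p - g p ∈ P := by
  have : (Ideal.Quotient.mkₐ R P).comp f = (Ideal.Quotient.mkₐ R P).comp g :=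
    algHom_ext fun i => by simpa [Ideal.Quotient.eq] using hX i
  simpa [Ideal.Quotient.eq] using AlgHom.congr_fun this p

theorem comap_rename_inl_map_rename_inr_sup_span (f : σ → MvPolynomial τ R)
    (N : Ideal (MvPolynomial τ R)) :
    (N.map (rename Sum.inr) ⊔
        Ideal.span (Set.range fun i => rename Sum.inr (f i) - X (Sum.inl i))).comap
      (rename (R := R) (Sum.inl : σ → σ ⊕ τ)) = N.comap (aeval f) := by
  set L := Ideal.span (Set.range fun i => rename Sum.inr (f i) - X (Sum.inl i) :
    Set (MvPolynomial (σ ⊕ τ) R))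
  set P := N.map (rename Sum.inr) ⊔ L
  set ψ : MvPolynomial (σ ⊕ τ) R →ₐ[R] MvPolynomial τ R := aeval (Sum.elim f X)
  have hψ_inr (q : MvPolynomial τ R) : ψ (rename Sum.inr q) = q := by
    simpa using AlgHom.congr_fun (show ψ.comp (rename Sum.inr) = AlgHom.id R _ from
      algHom_ext fun j => by simp [ψ]) q
  have hψ_inl : ψ.comp (rename Sum.inl) = aeval f := algHom_ext fun i => by simp [ψ]
  have hψP : P ≤ N.comap ψ := by
    refine sup_le ?_ (Ideal.span_le.2 ?_)
    · rw [Ideal.map_le_iff_le_comap]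
      intro q hq
      simpa [hψ_inr] using hq
    · rintro _ ⟨i, rfl⟩
      rw [SetLike.mem_coe, Ideal.mem_comap, map_sub, hψ_inr]
      simp [ψ]
  have hP : ∀ q, q - rename Sum.inr (ψ q) ∈ P := by
    refine algHom_sub_mem_of_X_sub_mem (AlgHom.id R _) ((rename Sum.inr).comp ψ) P ?_
    rintro (i | j)
    · have hgen : rename Sum.inr (f i) - X (Sum.inl i) ∈ L := Ideal.subset_span ⟨i, rfl⟩
      simpa [ψ] using Ideal.mem_sup_right (L.neg_mem hgen)
    · simp [ψ]
  ext p
  simp only [Ideal.mem_comap, ← hψ_inl, AlgHom.comp_apply]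
  refine ⟨fun h => hψP h, fun h => ?_⟩
  simpa using P.add_mem (hP (rename Sum.inl p))
    (Ideal.mem_sup_left (Ideal.mem_map_of_mem _ h))

end MvPolynomial

theorem IsLowerSet.sups {α : Type*} [DistribLattice α] {s t : Set α} (hs : IsLowerSet s)
    (ht : IsLowerSet t) : IsLowerSet (s ⊻ t) := by
  rintro _ c hc ⟨a, ha, b, hb, rfl⟩
  refine ⟨c ⊓ a, hs inf_le_right ha, c ⊓ b, ht inf_le_right hb, ?_⟩
  exact (inf_sup_left c a b).symm.trans (inf_eq_left.2 hc)

section StanleyReisner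

variable {K : Type*} [Field K] {n : ℕ}

theorem mem_srIdeal_of_forall_support_notMem {Γ : Set (Finset (Fin n))}
    {p : MvPolynomial (Fin n) K} (h : ∀ a ∈ p.support, a.support ∉ Γ) : p ∈ srIdeal K Γ := by
  rw [p.as_sum]
  refine Ideal.sum_mem _ fun a ha => Ideal.mem_of_dvd _ (prod_X_dvd_monomial a _) ?_
  exact Ideal.subset_span ⟨a.support, h a ha, rfl⟩

theorem srIdeal_le_ker_killOutside {Γ : Set (Finset (Fin n))} (hΓ : IsLowerSet Γ)
    {F : Finset (Fin n)} (hF : F ∈ Γ) : srIdeal K Γ ≤ RingHom.ker (killOutside F) := by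
  rw [srIdeal, Ideal.span_le]
  rintro _ ⟨V, hV, rfl⟩
  obtain ⟨i, hiV, hiF⟩ := Finset.not_subset.1 fun hVF => hV (hΓ hVF hF)
  simp only [SetLike.mem_coe, RingHom.mem_ker, map_prod]
  exact Finset.prod_eq_zero hiV (by simp [killOutside, hiF])

theorem prod_X_mem_map_srIdeal {τ : Type*} (f : Fin n → τ) {Γ : Set (Finset (Fin n))}
    {V : Finset (Fin n)} (hV : V ∉ Γ) :
    ∏ i ∈ V, (X (f i) : MvPolynomial τ K) ∈ (srIdeal K Γ).map (rename f) := by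
  rw [show ∏ i ∈ V, (X (f i) : MvPolynomial τ K) = rename f (∏ i ∈ V, X i) by simp]
  exact Ideal.mem_map_of_mem _ (Ideal.subset_span ⟨V, hV, rfl⟩)

theorem joinIdeal_eq_comap_joinMap (I J : Ideal (MvPolynomial (Fin n) K)) :
    joinIdeal I J =
      (I.map (rename Sum.inl) ⊔ J.map (rename Sum.inr)).comap (joinMap K (Fin n)) := by
  rw [joinMap, ← comap_rename_inl_map_rename_inr_sup_span, joinIdeal, Ideal.map_sup,
    Ideal.map_mapₐ, Ideal.map_mapₐ, rename_comp_rename, rename_comp_rename]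
  congr 3
  ext p
  simp [eq_comm]

theorem srIdeal_sups_le_comap_joinMap (Δ' Δ : Set (Finset (Fin n))) :
    srIdeal K (Δ' ⊻ Δ) ≤ ((srIdeal K Δ').map (rename Sum.inl) ⊔
      (srIdeal K Δ).map (rename Sum.inr)).comap (joinMap K (Fin n)) := by
  rw [srIdeal, Ideal.span_le]
  rintro _ ⟨V, hV, rfl⟩
  simp only [SetLike.mem_coe, Ideal.mem_comap, map_prod, joinMap, aeval_X, Finset.prod_add]
  refine Ideal.sum_mem _ fun A hA => ?_
  by_cases hA' : A ∈ Δ'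
  · have hVA : V \ A ∉ Δ := fun h =>
      hV ⟨A, hA', V \ A, h, Finset.union_sdiff_of_subset (Finset.mem_powerset.1 hA)⟩
    exact Ideal.mem_sup_right (Ideal.mul_mem_left _ _ (prod_X_mem_map_srIdeal _ hVA))
  · exact Ideal.mem_sup_left (Ideal.mul_mem_right _ _ (prod_X_mem_map_srIdeal _ hA'))

theorem killOutside_union_eq_zero_of_joinMap_mem {Δ' Δ : Set (Finset (Fin n))}
    (hΔ' : IsLowerSet Δ') (hΔ : IsLowerSet Δ) {F G : Finset (Fin n)} (hF : F ∈ Δ') (hG : G ∈ Δ)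
    (hFG : Disjoint F G) {p : MvPolynomial (Fin n) K}
    (hp : joinMap K (Fin n) p ∈
      (srIdeal K Δ').map (rename Sum.inl) ⊔ (srIdeal K Δ).map (rename Sum.inr)) :
    killOutside (F ∪ G) p = 0 := by
  set ρ : MvPolynomial (Fin n ⊕ Fin n) K →ₐ[K] MvPolynomial (Fin n) K :=
    aeval (Sum.elim (fun i => killOutside F (X i)) (fun i => killOutside G (X i)))
  have hρ_inl (q) : ρ (rename Sum.inl q) = killOutside F q := by
    simpa using AlgHom.congr_fun (show ρ.comp (rename Sum.inl) = killOutside F from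
      algHom_ext fun i => by simp [ρ]) q
  have hρ_inr (q) : ρ (rename Sum.inr q) = killOutside G q := by
    simpa using AlgHom.congr_fun (show ρ.comp (rename Sum.inr) = killOutside G from
      algHom_ext fun i => by simp [ρ]) q
  have hρ_join : ρ.comp (joinMap K (Fin n)) = killOutside (F ∪ G) := by
    refine algHom_ext fun i => ?_
    by_cases hiF : i ∈ F
    · simp [ρ, joinMap, killOutside, hiF, Finset.disjoint_left.1 hFG hiF]
    · simp [ρ, joinMap, killOutside, hiF]
  have hker : (srIdeal K Δ').map (rename Sum.inl) ⊔ (srIdeal K Δ).map (rename Sum.inr) ≤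
      RingHom.ker ρ := by
    refine sup_le ?_ ?_ <;> rw [Ideal.map_le_iff_le_comap] <;> intro q hq
    · simpa [hρ_inl] using srIdeal_le_ker_killOutside hΔ' hF hq
    · simpa [hρ_inr] using srIdeal_le_ker_killOutside hΔ hG hq
  rw [← hρ_join]
  exact hker hp

theorem joinIdeal_srIdeal {Δ' Δ : Set (Finset (Fin n))} (hΔ' : IsLowerSet Δ')
    (hΔ : IsLowerSet Δ) : joinIdeal (srIdeal K Δ') (srIdeal K Δ) = srIdeal K (Δ' ⊻ Δ) := by
  rw [joinIdeal_eq_comap_joinMap]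
  refine le_antisymm (fun p hp => mem_srIdeal_of_forall_support_notMem ?_)
    (srIdeal_sups_le_comap_joinMap Δ' Δ)
  rintro a ha ⟨A, hA, B, hB, hAB⟩
  have hkill := killOutside_union_eq_zero_of_joinMap_mem hΔ' hΔ hA
    (hΔ Finset.sdiff_subset hB) Finset.disjoint_sdiff hp
  rw [Finset.union_sdiff_self_eq_union] at hkill
  have hsub : a.support ⊆ A ∪ B := hAB.symm.subset
  exact mem_support_iff.1 ha (by rw [← coeff_killOutside_of_support_subset hsub, hkill, coeff_zero])

end StanleyReisner

section FaceUnions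

variable {σ : Type*} [DecidableEq σ]

def faceUnions (r : ℕ) (Δ : Set (Finset σ)) : Set (Finset σ) :=
  {F | ∃ g : Fin r → Finset σ, (∀ t, g t ∈ Δ) ∧ F = Finset.univ.biUnion g}

theorem faceUnions_zero (Δ : Set (Finset σ)) : faceUnions 0 Δ = {∅} := by
  ext F
  constructor
  · rintro ⟨g, -, rfl⟩
    simp
  · rintro rfl
    exact ⟨Fin.elim0, Fin.rec0, by simp⟩

theorem faceUnions_succ (r : ℕ) (Δ : Set (Finset σ)) :
    faceUnions (r + 1) Δ = faceUnions r Δ ⊻ Δ := by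
  have hcons (B : Finset σ) (g : Fin r → Finset σ) :
      Finset.univ.biUnion (Fin.cons B g : Fin (r + 1) → Finset σ) = Finset.univ.biUnion g ∪ B := by
    ext x
    simp [Fin.exists_fin_succ, or_comm]
  ext F
  constructor
  · rintro ⟨g, hg, rfl⟩
    refine ⟨_, ⟨Fin.tail g, fun t => hg t.succ, rfl⟩, g 0, hg 0, ?_⟩
    rw [← Fin.cons_self_tail g, hcons]
    rfl
  · rintro ⟨_, ⟨g, hg, rfl⟩, B, hB, rfl⟩
    exact ⟨Fin.cons B g, Fin.cases hB hg, (hcons B g).symm⟩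

theorem faceUnions_one (Δ : Set (Finset σ)) : faceUnions 1 Δ = Δ := by
  simp [faceUnions_succ, faceUnions_zero, Set.singleton_sups]

theorem isLowerSet_faceUnions {Δ : Set (Finset σ)} (hΔ : IsLowerSet Δ) (r : ℕ) :
    IsLowerSet (faceUnions r Δ) := by
  induction r with
  | zero =>
    rw [faceUnions_zero]
    rintro _ b hb rfl
    exact Finset.subset_empty.1 hb
  | succ r ih => exact faceUnions_succ r Δ ▸ ih.sups hΔ

end FaceUnions

theorem stmt_5_general (K : Type*) [Field K] (n r : ℕ) (hr : 1 ≤ r)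
    (Δ : Set (Finset (Fin n))) (hdown : ∀ s ∈ Δ, ∀ t, t ⊆ s → t ∈ Δ) :
    secantIdeal (srIdeal K Δ) r =
      srIdeal K {F : Finset (Fin n) |
        ∃ g : Fin r → Finset (Fin n), (∀ t, g t ∈ Δ) ∧ F = Finset.univ.biUnion g} := by
  have hΔ : IsLowerSet Δ := fun s t hts hs => hdown s hs t hts
  change _ = srIdeal K (faceUnions r Δ)
  induction r, hr using Nat.le_induction with
  | base => rw [faceUnions_one]; rfl
  | succ r hr ih =>
    obtain ⟨r, rfl⟩ := Nat.exists_eq_add_of_le' hr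
    rw [secantIdeal, ih, joinIdeal_srIdeal (isLowerSet_faceUnions hΔ _) hΔ, ← faceUnions_succ]

/-- for a simplicial complex `Δ` on `[n]` and `r ≥ 1`, in characteristic zero,
the `r`-th secant of the Stanley–Reisner ideal of `Δ` is the Stanley–Reisner ideal of the
complex `Δ^{r}` whose faces are the unions of `r` faces of `Δ`. -/
theorem stmt_5 (K : Type*) [Field K] [CharZero K] (n r : ℕ) (hr : 1 ≤ r)
    (Δ : Set (Finset (Fin n))) (hdown : ∀ s ∈ Δ, ∀ t, t ⊆ s → t ∈ Δ) (hne : ∅ ∈ Δ) :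
    secantIdeal (srIdeal K Δ) r =
      srIdeal K {F : Finset (Fin n) |
        ∃ g : Fin r → Finset (Fin n), (∀ t, g t ∈ Δ) ∧ F = Finset.univ.biUnion g} :=
  stmt_5_general K n r hr Δ hdown
end

section
/- Let G be a finite simple graph on [n] with edge ideal I(G) over a field of characteristic zero. The chromatic number χ(G) is the smallest integer r ≥ 0 such that the r-th secant ideal I(G)^{{r}} is the zero ideal. -/
open MvPolynomial

/-- The edge ideal `I(G)` of a graph `G` on `[n]`, generated by the monomials
`x_i x_j` for edges `{i,j}` of `G`. -/
noncomputable def edgeIdeal (K : Type*) [Field K] {n : ℕ} (G : SimpleGraph (Fin n)) :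
    Ideal (MvPolynomial (Fin n) K) :=
  Ideal.span {p : MvPolynomial (Fin n) K | ∃ i j : Fin n, G.Adj i j ∧ p = X i * X j}

/-!
If `G` is `r`-colorable, every point `a ∈ Kⁿ` is a sum of `r` points each supported on a color
class, hence on an independent set; such points are zeros of `I(G)`, and since the join of two
ideals vanishes at sums of zeros of the two ideals, `I(G)^{r}` vanishes on all of `Kⁿ`, so it is
`0` over an infinite field. Conversely, for every vertex set `W` that is not `r`-colorable the
monomial `∏_{i ∈ W} xᵢ` lies in `I(G)^{r}`: modulo `⟨yᵢ + zᵢ - xᵢ⟩` it equals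
`∑_{U ⊆ W} y^U z^{W \ U}`, and in each term either `U` is not `(r-1)`-colorable or `W \ U`
contains an edge. Taking `W` to be all vertices gives a nonzero element of `I(G)^{r}`.
-/

namespace SimpleGraph

variable {V : Type*} {G : SimpleGraph V}

def ColorableOn (G : SimpleGraph V) (r : ℕ) (W : Finset V) : Prop :=
  ∃ f : V → ℕ, (∀ i ∈ W, f i < r) ∧ ∀ i ∈ W, ∀ j ∈ W, G.Adj i j → f i ≠ f j

lemma colorableOn_empty (r : ℕ) : G.ColorableOn r ∅ :=
  ⟨fun _ => 0, by simp, by simp⟩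

lemma ColorableOn.succ_of_isIndepSet {r : ℕ} {U W : Finset V} (hU : G.ColorableOn r U)
    (hind : G.IsIndepSet (↑W \ ↑U : Set V)) : G.ColorableOn (r + 1) W := by
  classical
  obtain ⟨f, hf_lt, hf_adj⟩ := hU
  refine ⟨fun i => if i ∈ U then f i else r, fun i _ => ?_, fun i hi j hj hadj => ?_⟩
  · dsimp only
    split_ifs with h
    · exact (hf_lt i h).trans (Nat.lt_succ_self r)
    · exact Nat.lt_succ_self r
  · by_cases hiU : i ∈ U <;> by_cases hjU : j ∈ U <;> simp only [hiU, hjU, if_true, if_false]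
    · exact hf_adj i hiU j hjU hadj
    · exact (hf_lt i hiU).ne
    · exact (hf_lt j hjU).ne'
    · exact (hind ⟨hi, hiU⟩ ⟨hj, hjU⟩ hadj.ne hadj).elim

lemma colorableOn_univ_iff [Fintype V] {r : ℕ} : G.ColorableOn r Finset.univ ↔ G.Colorable r := by
  constructor
  · rintro ⟨f, hf_lt, hf_adj⟩
    exact ⟨Coloring.mk (fun i => ⟨f i, hf_lt i (Finset.mem_univ i)⟩) fun hadj h =>
      hf_adj _ (Finset.mem_univ _) _ (Finset.mem_univ _) hadj (Fin.val_eq_of_eq h)⟩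
  · rintro ⟨C⟩
    exact ⟨fun i => C i, fun i _ => (C i).isLt, fun i _ j _ hadj h =>
      C.valid hadj (Fin.val_injective h)⟩

end SimpleGraph

open SimpleGraph

section EdgeIdeal

variable {K : Type*} [Field K] {n : ℕ}

lemma secantIdeal_zero (I : Ideal (MvPolynomial (Fin n) K)) :
    secantIdeal I 0 = Ideal.span (Set.range X) :=
  rfl

lemma secantIdeal_one (I : Ideal (MvPolynomial (Fin n) K)) : secantIdeal I 1 = I :=
  rfl

lemma secantIdeal_succ_succ (I : Ideal (MvPolynomial (Fin n) K)) (r : ℕ) :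
    secantIdeal I (r + 2) = joinIdeal (secantIdeal I (r + 1)) I :=
  rfl

section Vanishing

lemma joinIdeal_le_ker_eval {I J : Ideal (MvPolynomial (Fin n) K)} {b d : Fin n → K}
    (hI : I ≤ RingHom.ker (eval b)) (hJ : J ≤ RingHom.ker (eval d)) :
    joinIdeal I J ≤ RingHom.ker (eval (b + d)) := by
  intro q hq
  have hφ := (show _ ≤ RingHom.ker (eval (Sum.elim (b + d) (Sum.elim b d))) from
    sup_le (sup_le (Ideal.map_le_iff_le_comap.2 fun p hp => ?_)
      (Ideal.map_le_iff_le_comap.2 fun p hp => ?_)) (Ideal.span_le.2 ?_)) hq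
  · simpa [RingHom.mem_ker, eval_rename, Function.comp_def, Pi.add_def] using hφ
  · simpa [RingHom.mem_ker, eval_rename, Function.comp_def] using hI hp
  · simpa [RingHom.mem_ker, eval_rename, Function.comp_def] using hJ hp
  · rintro p ⟨i, rfl⟩
    simp [RingHom.mem_ker]

lemma secantIdeal_le_ker_eval_sum (I : Ideal (MvPolynomial (Fin n) K)) :
    ∀ {r : ℕ} (c : Fin r → Fin n → K), (∀ k, I ≤ RingHom.ker (eval (c k))) →
      secantIdeal I r ≤ RingHom.ker (eval (∑ k, c k))
  | 0, _, _ => Ideal.span_le.2 <| by rintro p ⟨i, rfl⟩; simp [RingHom.mem_ker]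
  | 1, c, hc => by simpa [secantIdeal_one] using hc 0
  | r + 2, c, hc => by
    rw [Fin.sum_univ_castSucc, secantIdeal_succ_succ]
    exact joinIdeal_le_ker_eval
      (secantIdeal_le_ker_eval_sum I (fun k => c k.castSucc) fun k => hc _) (hc _)

lemma edgeIdeal_le_ker_eval (G : SimpleGraph (Fin n)) {d : Fin n → K}
    (hd : ∀ i j, G.Adj i j → d i * d j = 0) : edgeIdeal K G ≤ RingHom.ker (eval d) :=
  Ideal.span_le.2 <| by
    rintro p ⟨i, j, hij, rfl⟩
    simp [RingHom.mem_ker, hd i j hij]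

lemma secantIdeal_edgeIdeal_eq_bot_of_colorable [Infinite K] {G : SimpleGraph (Fin n)} {r : ℕ}
    (hG : G.Colorable r) : secantIdeal (edgeIdeal K G) r = ⊥ := by
  obtain ⟨C⟩ := hG
  refine le_bot_iff.1 fun q hq => Ideal.mem_bot.2 <| MvPolynomial.funext fun a => ?_
  have ha : a = ∑ k, fun i => if C i = k then a i else 0 := by
    funext i
    simp only [Finset.sum_apply, Finset.sum_ite_eq, Finset.mem_univ, if_true]
  have hcolor : ∀ k, edgeIdeal K G ≤ RingHom.ker (eval fun i => if C i = k then a i else 0) :=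
    fun k => edgeIdeal_le_ker_eval G fun i j hadj => by
      have := C.valid hadj
      split_ifs with hi hj <;> first | exact absurd (hi.trans hj.symm) this | simp
  rw [map_zero, ha]
  exact secantIdeal_le_ker_eval_sum _ _ hcolor hq

end Vanishing

section Monomials

lemma prod_X_mem_joinIdeal {I J : Ideal (MvPolynomial (Fin n) K)} (W : Finset (Fin n))
    (h : ∀ U ⊆ W, ∏ i ∈ U, X i ∈ I ∨ ∏ i ∈ W \ U, X i ∈ J) :
    ∏ i ∈ W, X i ∈ joinIdeal I J := by
  set y : Fin n → MvPolynomial (Fin n ⊕ (Fin n ⊕ Fin n)) K := fun i => X (Sum.inr (Sum.inl i))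
  set z : Fin n → MvPolynomial (Fin n ⊕ (Fin n ⊕ Fin n)) K := fun i => X (Sum.inr (Sum.inr i))
  have hexpand : ∏ i ∈ W, (y i + z i) ∈
      Ideal.map (rename fun i => (Sum.inr (Sum.inl i) : Fin n ⊕ (Fin n ⊕ Fin n))) I ⊔
        Ideal.map (rename fun i => (Sum.inr (Sum.inr i) : Fin n ⊕ (Fin n ⊕ Fin n))) J := by
    rw [Finset.prod_add]
    refine Ideal.sum_mem _ fun U hU => ?_
    rcases h U (Finset.mem_powerset.1 hU) with hI | hJ
    · refine Ideal.mem_sup_left (Ideal.mul_mem_right _ _ ?_)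
      simpa [y, map_prod] using Ideal.mem_map_of_mem (rename _) hI
    · refine Ideal.mem_sup_right (Ideal.mul_mem_left _ _ ?_)
      simpa [z, map_prod] using Ideal.mem_map_of_mem (rename _) hJ
  have hlinear : ∏ i ∈ W, X (Sum.inl i) - ∏ i ∈ W, (y i + z i) ∈
      Ideal.span {p : MvPolynomial (Fin n ⊕ (Fin n ⊕ Fin n)) K | ∃ i : Fin n,
        p = X (Sum.inr (Sum.inl i)) + X (Sum.inr (Sum.inr i)) - X (Sum.inl i)} := by
    rw [← Ideal.Quotient.eq, map_prod, map_prod]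
    refine Finset.prod_congr rfl fun i _ => Ideal.Quotient.eq.2 ?_
    rw [← neg_sub]
    exact neg_mem (Ideal.subset_span ⟨i, rfl⟩)
  rw [joinIdeal, Ideal.mem_comap, map_prod]
  simp only [rename_X]
  rw [← sub_add_cancel (∏ i ∈ W, X (Sum.inl i)) (∏ i ∈ W, (y i + z i))]
  exact add_mem (Ideal.mem_sup_right hlinear) (Ideal.mem_sup_left hexpand)

lemma X_mul_X_mem_edgeIdeal {G : SimpleGraph (Fin n)} {i j : Fin n} (h : G.Adj i j) :
    X i * X j ∈ edgeIdeal K G :=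
  Ideal.subset_span ⟨i, j, h, rfl⟩

lemma prod_X_mem_edgeIdeal_of_not_isIndepSet {G : SimpleGraph (Fin n)} {W : Finset (Fin n)}
    (hW : ¬ G.IsIndepSet (W : Set (Fin n))) : ∏ i ∈ W, X i ∈ edgeIdeal K G := by
  classical
  obtain ⟨i, hi, j, hj, hij, hadj⟩ : ∃ i ∈ W, ∃ j ∈ W, i ≠ j ∧ G.Adj i j := by
    simpa [isIndepSet_iff, Set.Pairwise] using hW
  refine Ideal.mem_of_dvd _ ?_ (X_mul_X_mem_edgeIdeal hadj)
  rw [← Finset.prod_pair hij]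
  exact Finset.prod_dvd_prod_of_subset _ _ _ (Finset.insert_subset hi (by simpa using hj))

lemma prod_X_mem_secantIdeal_edgeIdeal (G : SimpleGraph (Fin n)) :
    ∀ (r : ℕ) (W : Finset (Fin n)), ¬ G.ColorableOn r W →
      ∏ i ∈ W, X i ∈ secantIdeal (edgeIdeal K G) r
  | 0, W, hW => by
    obtain ⟨i, hi⟩ := W.nonempty_iff_ne_empty.2 <| by
      rintro rfl
      exact hW (colorableOn_empty 0)
    rw [secantIdeal_zero]
    exact Ideal.mem_of_dvd _ (Finset.dvd_prod_of_mem X hi) (Ideal.subset_span ⟨i, rfl⟩)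
  | 1, W, hW => prod_X_mem_edgeIdeal_of_not_isIndepSet fun hind =>
      hW ((colorableOn_empty 0).succ_of_isIndepSet (by simpa using hind))
  | r + 2, W, hW => prod_X_mem_joinIdeal W fun U _ => by
    by_cases hUc : G.ColorableOn (r + 1) U
    · exact .inr <| prod_X_mem_edgeIdeal_of_not_isIndepSet fun hind =>
        hW (hUc.succ_of_isIndepSet (by rwa [Finset.coe_sdiff] at hind))
    · exact .inl <| prod_X_mem_secantIdeal_edgeIdeal G (r + 1) U hUc

lemma colorable_of_secantIdeal_edgeIdeal_eq_bot {G : SimpleGraph (Fin n)} {r : ℕ}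
    (h : secantIdeal (edgeIdeal K G) r = ⊥) : G.Colorable r := by
  rw [← colorableOn_univ_iff]
  by_contra hG
  have hmem := prod_X_mem_secantIdeal_edgeIdeal (K := K) G r Finset.univ hG
  rw [h, Ideal.mem_bot] at hmem
  exact Finset.prod_ne_zero_iff.2 (fun i _ => X_ne_zero i) hmem

end Monomials

lemma secantIdeal_edgeIdeal_eq_bot_iff [Infinite K] {G : SimpleGraph (Fin n)} {r : ℕ} :
    secantIdeal (edgeIdeal K G) r = ⊥ ↔ G.Colorable r :=
  ⟨colorable_of_secantIdeal_edgeIdeal_eq_bot, secantIdeal_edgeIdeal_eq_bot_of_colorable⟩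

end EdgeIdeal

/-- in characteristic zero, the chromatic number of `G` is the smallest
`r ≥ 0` such that the `r`-th secant ideal of the edge ideal `I(G)` is the zero ideal. -/
theorem stmt_6 (K : Type*) [Field K] [CharZero K] (n : ℕ) (G : SimpleGraph (Fin n)) :
    G.chromaticNumber =
      sInf {c : ℕ∞ | ∃ r : ℕ, c = (r : ℕ∞) ∧ secantIdeal (edgeIdeal K G) r = ⊥} := by
  have hset : {c : ℕ∞ | ∃ r : ℕ, c = (r : ℕ∞) ∧ secantIdeal (edgeIdeal K G) r = ⊥} =
      (fun r : ℕ => (r : ℕ∞)) '' {r | G.Colorable r} := by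
    ext c
    simp [secantIdeal_edgeIdeal_eq_bot_iff, eq_comm, and_comm]
  rw [hset, sInf_image, chromaticNumber_eq_biInf]
end

section
/- A finite simple graph G is perfect if and only if for every r ≥ 1 and every vertex subset V that is minimal among subsets with chromatic number of the induced subgraph exceeding r, the induced subgraph G_V is a complete graph on r+1 vertices. -/
/-!
Since `ω ≤ χ` always, `χ(G_V) = ω(G_V)` says exactly that `G_V` is `ω(G_V)`-colourable.
If `G` is perfect and `V` is minimal with `χ(G_V) > r`, then `G_V` contains an `(r+1)`-clique,
which already needs `r + 1` colours, so by minimality it is all of `V`. Conversely, if some `G_V`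
is not `ω(G_V)`-colourable, a minimal non-`ω(G_V)`-colourable `W ⊆ V` would induce a clique on
`ω(G_V) + 1` vertices inside `V`.
-/

open SimpleGraph

/-- A graph is perfect if for every induced subgraph the chromatic number equals
the clique number. -/
def IsPerfect {α : Type*} (G : SimpleGraph α) : Prop :=
  ∀ V : Set α, (G.induce V).chromaticNumber = ((G.induce V).cliqueNum : ℕ∞)

namespace SimpleGraph

variable {α : Type*} {G : SimpleGraph α}

theorem cliqueFree_iff_cliqueNum_lt [Finite α] {m : ℕ} : G.CliqueFree m ↔ G.cliqueNum < m := by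
  refine ⟨fun h => ?_, fun hm t ht => ?_⟩
  · by_contra! hm
    obtain ⟨s, hs⟩ := G.exists_isNClique_cliqueNum
    exact h.mono hm s hs
  · have : t.card ≤ G.cliqueNum := IsClique.card_le_cliqueNum (tc := ht.isClique)
    rw [ht.card_eq] at this
    omega

theorem chromaticNumber_eq_cliqueNum_iff [Finite α] :
    G.chromaticNumber = G.cliqueNum ↔ G.Colorable G.cliqueNum := by
  rw [← chromaticNumber_le_iff_colorable]
  exact ⟨le_of_eq, fun h => h.antisymm G.cliqueNum_le_chromaticNumber⟩

theorem IsNClique.not_colorable_induce {m r : ℕ} {t : Finset α} (ht : G.IsNClique m t)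
    (hr : r < m) : ¬(G.induce (t : Set α)).Colorable r := fun hc =>
  (cliqueFree_induce_iff ..).1 (hc.cliqueFree hr) subset_rfl ht

theorem IsNClique.nonempty_induce_iso {m : ℕ} {t : Finset α} (ht : G.IsNClique m t) :
    Nonempty (G.induce (t : Set α) ≃g completeGraph (Fin m)) := by
  rw [induce_eq_top.2 ht.isClique]
  exact ⟨Iso.completeGraph (Fintype.equivFinOfCardEq (by simp [ht.card_eq]))⟩

theorem not_cliqueFreeOn_of_induce_iso {W : Set α} {m : ℕ}
    (e : G.induce W ≃g completeGraph (Fin m)) : ¬G.CliqueFreeOn W m := by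
  rw [← cliqueFree_induce_iff]
  exact e.isContained'.not_cliqueFree

theorem exists_minimal_not_colorable_induce [Finite α] {V : Set α} {r : ℕ}
    (hV : ¬(G.induce V).Colorable r) :
    ∃ W ⊆ V, ¬(G.induce W).Colorable r ∧ ∀ U ⊂ W, (G.induce U).Colorable r := by
  obtain ⟨W, hWV, hW⟩ :=
    exists_minimal_le_of_wellFoundedLT (fun U : Set α => ¬(G.induce U).Colorable r) V hV
  exact ⟨W, hWV, hW.prop, fun U hU => not_not.1 (hW.not_prop_of_lt hU)⟩

end SimpleGraph

section

variable {α : Type*} {G : SimpleGraph α}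

theorem IsPerfect.nonempty_induce_iso_of_minimal_not_colorable [Finite α] (hG : IsPerfect G)
    {r : ℕ} {V : Set α} (hV : ¬(G.induce V).Colorable r)
    (hmin : ∀ U ⊂ V, (G.induce U).Colorable r) :
    Nonempty (G.induce V ≃g completeGraph (Fin (r + 1))) := by
  have hω : r < (G.induce V).cliqueNum := lt_of_not_ge fun h =>
    hV ((chromaticNumber_eq_cliqueNum_iff.1 (hG V)).mono h)
  have : ¬G.CliqueFreeOn V (r + 1) := by
    rw [← cliqueFree_induce_iff, cliqueFree_iff_cliqueNum_lt]
    omega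
  obtain ⟨t, htV, ht⟩ : ∃ t : Finset α, ↑t ⊆ V ∧ G.IsNClique (r + 1) t := by
    simpa [CliqueFreeOn] using this
  obtain rfl : (t : Set α) = V := by_contra fun hne =>
    ht.not_colorable_induce r.lt_succ_self (hmin _ (ssubset_of_ne_of_subset hne htV))
  exact ht.nonempty_induce_iso

theorem isPerfect_of_forall_minimal_not_colorable [Finite α]
    (h : ∀ r, 1 ≤ r → ∀ V : Set α, ¬(G.induce V).Colorable r →
      (∀ U ⊂ V, (G.induce U).Colorable r) → Nonempty (G.induce V ≃g completeGraph (Fin (r + 1)))) :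
    IsPerfect G := by
  intro V
  rw [chromaticNumber_eq_cliqueNum_iff]
  set ω := (G.induce V).cliqueNum
  have hfree : (G.induce V).CliqueFree (ω + 1) := cliqueFree_iff_cliqueNum_lt.2 ω.lt_succ_self
  rcases Nat.eq_zero_or_pos ω with hω | hω
  · have : IsEmpty V := cliqueFree_one.1 (hω ▸ hfree)
    exact .of_isEmpty ω
  by_contra hV
  obtain ⟨W, hWV, hW, hmin⟩ := exists_minimal_not_colorable_induce hV
  obtain ⟨e⟩ := h ω hω W hW hmin
  exact not_cliqueFreeOn_of_induce_iso e
    (((cliqueFree_induce_iff ..).1 hfree).subset _ hWV)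

end

/-- `G` is perfect iff for every `r ≥ 1`, every vertex set `V` minimal among
those with `χ(G_V) > r` induces a complete graph on `r+1` vertices. -/
theorem stmt_9 (n : ℕ) (G : SimpleGraph (Fin n)) :
    IsPerfect G ↔
      ∀ r : ℕ, 1 ≤ r → ∀ V : Set (Fin n),
        ¬ (G.induce V).Colorable r →
        (∀ U : Set (Fin n), U ⊂ V → (G.induce U).Colorable r) →
        Nonempty (G.induce V ≃g completeGraph (Fin (r + 1))) :=
  ⟨fun hG _ _ _ hV hmin => hG.nonempty_induce_iso_of_minimal_not_colorable hV hmin,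
    isPerfect_of_forall_minimal_not_colorable⟩
end

section
/- Let C be a cycle of length n > 3 and G its complement graph. For r with 2r ≤ n, a set F ⊆ [n] of cardinality 2r is a union of r independent sets of G (equivalently, r pairwise disjoint edges of C) if and only if F satisfies Gale's evenness condition: for every i ≤ j with i, j ∉ F, the cardinality of {i, i+1, ..., j} ∩ F is even. -/
/-!
An independent set of the complement of the cycle is a clique of the cycle; for `n > 3` the
cycle has no triangles, so such a set is a vertex or an edge of the cycle.

If `r` of them cover `F` with `|F| = 2r`, an interval `[i, j]` whose ends lie outside `F` never
separates the two ends of a cycle edge. So `F ∩ [i, j]` is covered by the `|T|` sets lying inside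
the interval and `F \ [i, j]` by the other `r - |T|`; as each set has at most two points and the
two parts have `2r` points together, `|F ∩ [i, j]| = 2|T|`.

Conversely, Gale's condition says that the number of points of `F` below a point outside `F` has a
constant parity `ε`. List `F` as `x₀ < ⋯ < x₂ᵣ₋₁` and pair `xₖ` with `xₖ₊₁ mod 2r` for `k ≡ ε`.
These pairs are cycle edges: a point strictly between `xₖ` and `xₖ₊₁` would be outside `F` with
`k + 1` points of `F` below it, and, for `ε = 1`, a missing `0` or `n - 1` would be a point
outside `F` with `0` or `2r` points of `F` below it.
-/

open SimpleGraph Finset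

section LinearOrder

variable {α : Type*} [LinearOrder α]

def IsGaleEven (F : Finset α) : Prop :=
  ∀ i j, i ≤ j → i ∉ F → j ∉ F → Even #(F.filter fun k => i ≤ k ∧ k ≤ j)

theorem card_filter_lt_eq_add (F : Finset α) {i j : α} (hij : i ≤ j) (hj : j ∉ F) :
    #(F.filter (· < j)) = #(F.filter (· < i)) + #(F.filter fun k => i ≤ k ∧ k ≤ j) := by
  rw [← card_filter_add_card_filter_not (fun k => k < i), filter_filter, filter_filter]
  congr 2
  · exact filter_congr fun k _ => ⟨And.right, fun h => ⟨h.trans_le hij, h⟩⟩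
  · refine filter_congr fun k hk => ?_
    have : k ≠ j := fun h => hj (h ▸ hk)
    constructor
    · rintro ⟨hkj, hik⟩; exact ⟨not_lt.mp hik, hkj.le⟩
    · rintro ⟨hik, hkj⟩; exact ⟨lt_of_le_of_ne hkj this, not_lt.mpr hik⟩

theorem IsGaleEven.card_filter_lt_mod_two_eq {F : Finset α} (hF : IsGaleEven F) {i j : α}
    (hi : i ∉ F) (hj : j ∉ F) : #(F.filter (· < i)) % 2 = #(F.filter (· < j)) % 2 := by
  wlog hij : i ≤ j generalizing i j
  · exact (this hj hi (le_of_not_ge hij)).symm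
  obtain ⟨c, hc⟩ := hF i j hij hi hj
  rw [card_filter_lt_eq_add F hij hj, hc]
  omega

theorem IsGaleEven.exists_card_filter_lt_mod_two {F : Finset α} (hF : IsGaleEven F) :
    ∃ ε < 2, ∀ g ∉ F, #(F.filter (· < g)) % 2 = ε := by
  by_cases h : ∃ g, g ∉ F
  · obtain ⟨g₀, hg₀⟩ := h
    exact ⟨_, Nat.mod_lt _ two_pos, fun g hg => hF.card_filter_lt_mod_two_eq hg hg₀⟩
  · push Not at h
    exact ⟨0, two_pos, fun g hg => absurd (h g) hg⟩

theorem notMem_and_card_filter_lt_eq {F : Finset α} {m : ℕ} (h : #F = m) {K : ℕ}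
    (hK : K ≤ m) {g : α} (hlo : ∀ k : Fin m, ↑k < K → F.orderEmbOfFin h k < g)
    (hhi : ∀ k : Fin m, K ≤ ↑k → g < F.orderEmbOfFin h k) :
    g ∉ F ∧ #(F.filter (· < g)) = K := by
  set e := F.orderEmbOfFin h
  have hmem : ∀ x ∈ F, ∃ k, e k = x := fun x hx => by
    rwa [← Set.mem_range, range_orderEmbOfFin]
  have hlt : ∀ k, e k < g ↔ ↑k < K := fun k =>
    ⟨fun hk => not_le.mp fun hKk => (hhi k hKk).not_gt hk, hlo k⟩
  refine ⟨fun hg => ?_, ?_⟩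
  · obtain ⟨k, rfl⟩ := hmem g hg
    rcases lt_or_ge (k : ℕ) K with hk | hk
    exacts [lt_irrefl _ (hlo k hk), lt_irrefl _ (hhi k hk)]
  · have : F.filter (· < g) = (univ.filter fun k : Fin m => ↑k < K).map e.toEmbedding := by
      ext x
      simp only [mem_filter, mem_map, mem_univ, true_and, RelEmbedding.coe_toEmbedding]
      constructor
      · rintro ⟨hx, hxg⟩
        obtain ⟨k, rfl⟩ := hmem x hx
        exact ⟨k, (hlt k).mp hxg, rfl⟩
      · rintro ⟨k, hk, rfl⟩
        exact ⟨orderEmbOfFin_mem F h k, (hlt k).mpr hk⟩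
    rw [this, card_map, Fin.card_filter_val_lt, min_eq_right hK]

end LinearOrder

theorem even_card_filter_of_subset_biUnion {α ι : Type*} [DecidableEq α] [Fintype ι]
    {F : Finset α} {g : ι → Finset α} (hcover : F ⊆ univ.biUnion g) (hg : ∀ t, #(g t) ≤ 2)
    (hF : #F = 2 * Fintype.card ι) (p : α → Prop) [DecidablePred p]
    (hp : ∀ t, ∀ a ∈ g t, ∀ b ∈ g t, p a → p b) : Even #(F.filter p) := by
  classical
  set T := univ.filter fun t => ∃ a ∈ g t, p a
  have hbound : ∀ U : Finset ι, #(U.biUnion g) ≤ 2 * #U := fun U =>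
    calc #(U.biUnion g) ≤ ∑ t ∈ U, #(g t) := card_biUnion_le
      _ ≤ #U * 2 := sum_le_card_nsmul _ _ _ fun t _ => hg t
      _ = 2 * #U := mul_comm _ _
  have hin : F.filter p ⊆ T.biUnion g := fun x hx => by
    obtain ⟨hxF, hpx⟩ := mem_filter.mp hx
    obtain ⟨t, -, hxt⟩ := mem_biUnion.mp (hcover hxF)
    exact mem_biUnion.mpr ⟨t, mem_filter.mpr ⟨mem_univ t, x, hxt, hpx⟩, hxt⟩
  have hout : F.filter (fun x => ¬p x) ⊆ Tᶜ.biUnion g := fun x hx => by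
    obtain ⟨hxF, hpx⟩ := mem_filter.mp hx
    obtain ⟨t, -, hxt⟩ := mem_biUnion.mp (hcover hxF)
    refine mem_biUnion.mpr ⟨t, mem_compl.mpr fun ht => hpx ?_, hxt⟩
    obtain ⟨a, hat, hpa⟩ := (mem_filter.mp ht).2
    exact hp t a hat x hxt hpa
  have hsplit := card_filter_add_card_filter_not (s := F) p
  have hT := card_compl_add_card T
  have h1 := (card_le_card hin).trans (hbound T)
  have h2 := (card_le_card hout).trans (hbound Tᶜ)
  exact ⟨#T, by omega⟩

namespace SimpleGraph

theorem IsClique.card_le_of_cliqueFree {V : Type*} {G : SimpleGraph V} {k : ℕ}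
    (hG : G.CliqueFree (k + 1)) {s : Finset V} (hs : G.IsClique (s : Set V)) : #s ≤ k := by
  by_contra! hk
  obtain ⟨t, hts, ht⟩ := exists_subset_card_eq (show k + 1 ≤ #s from hk)
  exact hG t ⟨hs.subset (coe_subset.mpr hts), ht⟩

theorem isClique_iff_forall_not_compl_adj {V : Type*} {G : SimpleGraph V}
    {s : Set V} : G.IsClique s ↔ ∀ a ∈ s, ∀ b ∈ s, ¬ Gᶜ.Adj a b := by
  simp only [IsClique, Set.Pairwise, compl_adj, not_and, not_not]

variable {n : ℕ}

theorem cycleGraph_adj_iff_val (hn : 1 < n) {u v : Fin n} :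
    (cycleGraph n).Adj u v ↔ u.val + 1 = v.val ∨ v.val + 1 = u.val ∨
      (u.val = 0 ∧ v.val + 1 = n) ∨ (v.val = 0 ∧ u.val + 1 = n) := by
  have hsub : ∀ a b : Fin n, (a - b).val = 1 ↔ a.val = b.val + 1 ∨ (a.val = 0 ∧ b.val + 1 = n) :=
    fun a b => by
      rcases le_or_gt b a with hba | hab
      · rw [Fin.coe_sub_iff_le.mpr hba]; omega
      · rw [Fin.coe_sub_iff_lt.mpr hab]; omega
  rw [cycleGraph_adj', hsub, hsub]
  omega

theorem cycleGraph_cliqueFree_three (hn : 3 < n) : (cycleGraph n).CliqueFree 3 := by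
  intro s hs
  obtain ⟨a, b, c, hab, hac, hbc, -⟩ := is3Clique_iff.mp hs
  have hab' := Fin.val_ne_of_ne hab.ne
  have hac' := Fin.val_ne_of_ne hac.ne
  have hbc' := Fin.val_ne_of_ne hbc.ne
  rw [cycleGraph_adj_iff_val (by omega)] at hab hac hbc
  omega

theorem cycleGraph_adj_mem_Icc_of_mem_Icc {a b i j : Fin n} (hab : (cycleGraph n).Adj a b)
    (hia : i ≠ a) (hib : i ≠ b) (hja : j ≠ a) (hjb : j ≠ b) (ha : i ≤ a ∧ a ≤ j) :
    i ≤ b ∧ b ≤ j := by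
  have hn : 1 < n := by have := Fin.val_ne_of_ne hab.ne; omega
  rw [cycleGraph_adj_iff_val hn] at hab
  simp only [Fin.le_def, ne_eq, Fin.ext_iff] at hia hib hja hjb ha ⊢
  omega

end SimpleGraph

theorem isGaleEven_of_isClique_cover {n : ℕ} (hn : 3 < n) {ι : Type*} [Fintype ι]
    {F : Finset (Fin n)} {f : ι → Set (Fin n)} (hf : ∀ t, (cycleGraph n).IsClique (f t))
    (hF : (F : Set (Fin n)) = ⋃ t, f t) (hcard : #F = 2 * Fintype.card ι) : IsGaleEven F := by
  classical
  intro i j _ hi hj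
  refine even_card_filter_of_subset_biUnion (g := fun t => F.filter (· ∈ f t)) ?_ ?_ hcard _ ?_
  · intro x hx
    obtain ⟨t, hxt⟩ := Set.mem_iUnion.mp (hF ▸ mem_coe.mpr hx)
    exact mem_biUnion.mpr ⟨t, mem_univ t, mem_filter.mpr ⟨hx, hxt⟩⟩
  · refine fun t => IsClique.card_le_of_cliqueFree (cycleGraph_cliqueFree_three hn) ?_
    exact (hf t).subset fun x hx => (mem_filter.mp hx).2
  · intro t a ha b hb hpa
    obtain ⟨haF, hat⟩ := mem_filter.mp ha
    obtain ⟨hbF, hbt⟩ := mem_filter.mp hb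
    rcases eq_or_ne a b with rfl | hab
    · exact hpa
    exact cycleGraph_adj_mem_Icc_of_mem_Icc (hf t hat hbt hab) (ne_of_mem_of_not_mem haF hi).symm
      (ne_of_mem_of_not_mem hbF hi).symm (ne_of_mem_of_not_mem haF hj).symm
      (ne_of_mem_of_not_mem hbF hj).symm hpa

section NoGap

variable {n m : ℕ} {F : Finset (Fin n)}

theorem val_orderEmbOfFin_succ (h : #F = m) {K : ℕ}
    (hK : ∀ g ∉ F, #(F.filter (· < g)) ≠ K + 1) (hKm : K + 1 < m) :
    (F.orderEmbOfFin h ⟨K + 1, hKm⟩).val = (F.orderEmbOfFin h ⟨K, by omega⟩).val + 1 := by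
  set e := F.orderEmbOfFin h
  set a := e ⟨K, by omega⟩
  set b := e ⟨K + 1, hKm⟩
  have hab : a < b := e.strictMono (Fin.mk_lt_mk.mpr K.lt_succ_self)
  by_contra hne
  have hgn : a.val + 1 < n := by have := b.isLt; omega
  have hlo : ∀ k : Fin m, ↑k < K + 1 → e k < ⟨a.val + 1, hgn⟩ := fun k hk => by
    have : e k ≤ a := e.monotone (Fin.mk_le_mk.mpr (by omega))
    exact Fin.lt_def.mpr (Nat.lt_succ_of_le this)
  have hhi : ∀ k : Fin m, K + 1 ≤ ↑k → ⟨a.val + 1, hgn⟩ < e k := fun k hk => by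
    have : b ≤ e k := e.monotone (Fin.mk_le_mk.mpr hk)
    have hab' : a.val < b.val := hab
    show a.val + 1 < (e k).val
    rw [Fin.le_def] at this
    omega
  obtain ⟨hg, hcount⟩ := notMem_and_card_filter_lt_eq h hKm.le hlo hhi
  exact hK _ hg hcount

theorem val_orderEmbOfFin_zero (h : #F = m) (hK : ∀ g ∉ F, #(F.filter (· < g)) ≠ 0)
    (hm : 0 < m) : (F.orderEmbOfFin h ⟨0, hm⟩).val = 0 := by
  set e := F.orderEmbOfFin h
  by_contra hne
  have hn : 0 < n := (e ⟨0, hm⟩).pos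
  have hhi : ∀ k : Fin m, (0 : ℕ) ≤ ↑k → ⟨0, hn⟩ < e k := fun k _ =>
    Fin.lt_def.mpr <|
      (Nat.pos_of_ne_zero hne).trans_le (e.monotone (Fin.mk_le_mk.mpr k.val.zero_le))
  obtain ⟨hg, hcount⟩ := notMem_and_card_filter_lt_eq h m.zero_le
    (fun k hk => absurd hk k.val.not_lt_zero) hhi
  exact hK _ hg hcount

theorem val_orderEmbOfFin_last (h : #F = m) (hK : ∀ g ∉ F, #(F.filter (· < g)) ≠ m)
    (hm : 0 < m) : (F.orderEmbOfFin h ⟨m - 1, by omega⟩).val + 1 = n := by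
  set e := F.orderEmbOfFin h
  set a := e ⟨m - 1, by omega⟩
  by_contra hne
  have hgn : n - 1 < n := by have := a.isLt; omega
  have hlo : ∀ k : Fin m, ↑k < m → e k < ⟨n - 1, hgn⟩ := fun k _ => by
    have : e k ≤ a := e.monotone (Fin.mk_le_mk.mpr (by omega))
    show (e k).val < n - 1
    rw [Fin.le_def] at this
    have := a.isLt
    omega
  obtain ⟨hg, hcount⟩ := notMem_and_card_filter_lt_eq h le_rfl hlo
    (fun k hk => absurd k.isLt (not_lt.mpr hk))
  exact hK _ hg hcount

end NoGap

theorem cycleGraph_adj_orderEmbOfFin {n r : ℕ} {F : Finset (Fin n)} (hF : #F = 2 * r) {ε : ℕ}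
    (hε : ∀ g ∉ F, #(F.filter (· < g)) % 2 = ε) {k : ℕ} (hk : k < 2 * r) (hkε : k % 2 = ε) :
    (cycleGraph n).Adj (F.orderEmbOfFin hF ⟨k, hk⟩)
      (F.orderEmbOfFin hF ⟨(k + 1) % (2 * r), Nat.mod_lt _ (by omega)⟩) := by
  have hgap : ∀ K, K % 2 ≠ ε → ∀ g ∉ F, #(F.filter (· < g)) ≠ K := fun K hK g hg hc =>
    hK (hc ▸ hε g hg)
  rcases (show k + 1 < 2 * r ∨ k + 1 = 2 * r by omega) with hk1 | hk1
  · simp only [Nat.mod_eq_of_lt hk1]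
    have hsucc := val_orderEmbOfFin_succ hF (hgap (k + 1) (by omega)) hk1
    rw [cycleGraph_adj_iff_val (by have := (F.orderEmbOfFin hF ⟨k + 1, hk1⟩).isLt; omega)]
    omega
  · simp only [hk1, Nat.mod_self]
    have hzero := val_orderEmbOfFin_zero hF (hgap 0 (by omega)) (by omega)
    have hlast := val_orderEmbOfFin_last hF (hgap (2 * r) (by omega)) (by omega)
    simp only [show 2 * r - 1 = k by omega] at hlast
    have hpos : (F.orderEmbOfFin hF ⟨0, by omega⟩) < F.orderEmbOfFin hF ⟨k, hk⟩ :=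
      (F.orderEmbOfFin hF).strictMono (Fin.mk_lt_mk.mpr (by omega))
    rw [Fin.lt_def] at hpos
    rw [cycleGraph_adj_iff_val (by omega)]
    omega

theorem exists_lt_two_mul_add_eq_or_mod_eq {r ε k : ℕ} (hε : ε < 2) (hk : k < 2 * r) :
    ∃ t < r, 2 * t + ε = k ∨ (2 * t + ε + 1) % (2 * r) = k := by
  by_cases hkε : k % 2 = ε
  · exact ⟨k / 2, by omega, Or.inl (by omega)⟩
  rcases Nat.eq_zero_or_pos k with rfl | hk0
  · refine ⟨r - 1, by omega, Or.inr ?_⟩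
    rw [show 2 * (r - 1) + ε + 1 = 2 * r by omega, Nat.mod_self]
  · exact ⟨(k - 1) / 2, by omega, Or.inr (by rw [Nat.mod_eq_of_lt (by omega)]; omega)⟩

theorem exists_isClique_cover_of_isGaleEven {n r : ℕ} {F : Finset (Fin n)} (hF : #F = 2 * r)
    (hgale : IsGaleEven F) :
    ∃ f : Fin r → Set (Fin n),
      (∀ t, (cycleGraph n).IsClique (f t)) ∧ (F : Set (Fin n)) = ⋃ t, f t := by
  obtain ⟨ε, hε2, hε⟩ := hgale.exists_card_filter_lt_mod_two
  set e := F.orderEmbOfFin hF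
  have hlt : ∀ t : Fin r, 2 * ↑t + ε < 2 * r := fun t => by omega
  refine ⟨fun t => {e ⟨2 * t + ε, hlt t⟩,
      e ⟨(2 * t + ε + 1) % (2 * r), Nat.mod_lt _ (Nat.zero_lt_of_lt (hlt t))⟩},
    fun t => isClique_pair.mpr fun _ => cycleGraph_adj_orderEmbOfFin hF hε (hlt t) (by omega), ?_⟩
  ext x
  simp only [mem_coe, Set.mem_iUnion, Set.mem_insert_iff, Set.mem_singleton_iff]
  constructor
  · intro hx
    obtain ⟨⟨k, hk⟩, rfl⟩ : x ∈ Set.range e := by rwa [range_orderEmbOfFin]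
    obtain ⟨t, ht, htk⟩ := exists_lt_two_mul_add_eq_or_mod_eq hε2 hk
    refine ⟨⟨t, ht⟩, htk.imp (fun h => ?_) (fun h => ?_)⟩ <;> simp only [h]
  · rintro ⟨t, rfl | rfl⟩ <;> exact orderEmbOfFin_mem F hF _

theorem stmt_10_general (n r : ℕ) (hn : 3 < n) (F : Finset (Fin n))
    (hF : F.card = 2 * r) :
    (∃ f : Fin r → Set (Fin n),
        (∀ t : Fin r, ∀ a ∈ f t, ∀ b ∈ f t, ¬ (cycleGraph n)ᶜ.Adj a b) ∧
        (↑F : Set (Fin n)) = ⋃ t, f t) ↔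
      (∀ i j : Fin n, i ≤ j → i ∉ F → j ∉ F →
        Even ((F.filter (fun k => i ≤ k ∧ k ≤ j)).card)) := by
  simp only [← isClique_iff_forall_not_compl_adj]
  constructor
  · rintro ⟨f, hf, hcover⟩
    exact isGaleEven_of_isClique_cover hn hf hcover (by rw [hF, Fintype.card_fin])
  · exact exists_isClique_cover_of_isGaleEven hF

/-- for the complement `G` of a cycle of length `n > 3` and `2r ≤ n`,
a set `F` of cardinality `2r` is a union of `r` independent sets of `G` iff `F`
satisfies Gale's evenness condition. -/
theorem stmt_10 (n r : ℕ) (hn : 3 < n) (hr : 2 * r ≤ n) (F : Finset (Fin n))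
    (hF : F.card = 2 * r) :
    (∃ f : Fin r → Set (Fin n),
        (∀ t : Fin r, ∀ a ∈ f t, ∀ b ∈ f t, ¬ (cycleGraph n)ᶜ.Adj a b) ∧
        (↑F : Set (Fin n)) = ⋃ t, f t) ↔
      (∀ i j : Fin n, i ≤ j → i ∉ F → j ∉ F →
        Even ((F.filter (fun k => i ≤ k ∧ k ≤ j)).card)) :=
  stmt_10_general n r hn F hF
end

section
/- For any ideals I_1, ..., I_r in K[x_1,...,x_n] and any term order ≺, the initial ideal of the join is contained in the join of the initial ideals: in_≺(I_1 * ⋯ * I_r) ⊆ in_≺(I_1) * ⋯ * in_≺(I_r). -/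
open MvPolynomial

/-- The leading monomial of a nonzero polynomial with respect to a linear order `ord`
on exponent vectors. -/
noncomputable def leadMonomial {K : Type*} [Field K] {n : ℕ}
    (ord : LinearOrder (Fin n →₀ ℕ)) (f : MvPolynomial (Fin n) K) (hf : f ≠ 0) :
    Fin n →₀ ℕ :=
  @Finset.max' _ ord f.support (MvPolynomial.support_nonempty.mpr hf)

/-- The initial ideal of `I` with respect to a linear order on exponent vectors:
generated by the leading monomials of the nonzero elements of `I`. -/
noncomputable def initialIdeal {K : Type*} [Field K] {n : ℕ}
    (ord : LinearOrder (Fin n →₀ ℕ)) (I : Ideal (MvPolynomial (Fin n) K)) :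
    Ideal (MvPolynomial (Fin n) K) :=
  Ideal.span {p : MvPolynomial (Fin n) K |
    ∃ f ∈ I, ∃ hf : f ≠ 0, p = monomial (leadMonomial ord f hf) (1 : K)}

/-- The join `I_1 * I_2 * ⋯ * I_{r+1}` of a finite sequence of ideals. -/
noncomputable def joinSeq {K : Type*} [Field K] {n : ℕ} :
    (r : ℕ) → (Fin (r + 1) → Ideal (MvPolynomial (Fin n) K)) → Ideal (MvPolynomial (Fin n) K)
  | 0, I => I 0
  | r + 1, I => joinIdeal (joinSeq r (fun t => I t.castSucc)) (I (Fin.last (r + 1)))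

/-!
Under the substitution `x ↦ y + z`, `f ∈ I * J` iff `f(y + z) ∈ I(y) + J(z)`. Let `f ∈ I * J`
have leading monomial `x^a` and let `y^b z^c` occur in `(y + z)^a`, so `b + c = a`. If
`x^b ∉ in(I)` and `x^c ∉ in(J)`, there are linear forms `φ`, `ψ` vanishing on `I`, resp. `J`,
with `φ(x^b) ≠ 0 ≠ ψ(x^c)`, that kill every monomial below `x^b`, resp. `x^c`. The form
`y^u z^v ↦ φ(x^u) ψ(x^v)` vanishes on `I(y) + J(z)`; but applied to `f(y + z)` only the term
`y^b z^c` survives, because the order is compatible with addition, and its value is nonzero.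
So every monomial of `(y + z)^a` lies in `in(I)(y) + in(J)(z)`, which says `x^a ∈ in(I) * in(J)`;
induction on `r` does the rest.
-/

theorem Ideal.eq_zero_of_mem_span_of_mul {R M : Type*} [CommSemiring R] [AddCommMonoid M]
    (Φ : R →+ M) {s : Set R} (hs : ∀ x ∈ s, ∀ q, Φ (q * x) = 0) {p : R}
    (hp : p ∈ Ideal.span s) : Φ p = 0 := by
  suffices ∀ q, Φ (q * p) = 0 by simpa using this 1
  induction hp using Submodule.span_induction with
  | mem x hx => exact hs x hx
  | zero => simp
  | add x y _ _ hx hy => simp [mul_add, hx, hy]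
  | smul a x _ hx => exact fun q => by rw [smul_eq_mul, ← mul_assoc]; exact hx _

namespace MvPolynomial

variable {σ R : Type*} [CommSemiring R]

noncomputable def addSubst : MvPolynomial σ R →ₐ[R] MvPolynomial (σ ⊕ σ) R :=
  aeval fun i => X (.inl i) + X (.inr i)

noncomputable def foldWeight (j : σ ⊕ σ) : σ →₀ ℕ := Finsupp.single (j.elim id id) 1

lemma weight_foldWeight_sumElim (u v : σ →₀ ℕ) :
    Finsupp.weight foldWeight (u.sumElim v) = u + v := by
  have h (f : σ → σ ⊕ σ) (hf : ∀ i, (f i).elim id id = i) (w : σ →₀ ℕ) :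
      Finsupp.weight foldWeight (w.mapDomain f) = w := by
    induction w using Finsupp.induction_linear <;>
      simp_all [Finsupp.mapDomain_add, foldWeight, Finsupp.weight_single]
  rw [Finsupp.sumElim_eq_add, map_add, h _ (fun _ => rfl), h _ (fun _ => rfl)]

lemma isWeightedHomogeneous_addSubst_monomial (m : σ →₀ ℕ) (c : R) :
    IsWeightedHomogeneous foldWeight (addSubst (monomial m c)) m := by
  classical
  have hX (i : σ) : IsWeightedHomogeneous foldWeight
      (X (.inl i) + X (.inr i) : MvPolynomial (σ ⊕ σ) R) (Finsupp.single i 1) :=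
    (isWeightedHomogeneous_X R _ _).add (isWeightedHomogeneous_X R _ _)
  rw [addSubst, aeval_monomial, algebraMap_eq, Finsupp.prod]
  convert ((IsWeightedHomogeneous.prod m.support _ _ fun i _ => (hX i).pow (m i))).C_mul c
  simp_rw [Finsupp.smul_single_one]
  exact (Finsupp.sum_single m).symm

lemma coeff_addSubst (f : MvPolynomial σ R) (e : σ ⊕ σ →₀ ℕ) :
    coeff e (addSubst f) =
      coeff (Finsupp.weight foldWeight e) f *
        coeff e (addSubst (monomial (Finsupp.weight foldWeight e) (1 : R))) := by
  classical
  conv_lhs => rw [f.as_sum, map_sum, coeff_sum]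
  rw [Finset.sum_eq_single (Finsupp.weight foldWeight e)]
  · rw [← smul_eq_mul, ← coeff_smul, ← map_smul, smul_monomial, smul_eq_mul, mul_one]
  · intro m _ hm
    exact (isWeightedHomogeneous_addSubst_monomial m _).coeff_eq_zero e (Ne.symm hm)
  · intro hm
    rw [notMem_support_iff.mp hm, monomial_zero, map_zero, coeff_zero]

lemma rename_inl_monomial_mul_rename_inr_monomial (u v : σ →₀ ℕ) (a b : R) :
    rename Sum.inl (monomial u a) * rename Sum.inr (monomial v b) =
      (monomial (u.sumElim v) (a * b) : MvPolynomial (σ ⊕ σ) R) := by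
  rw [rename_monomial, rename_monomial, monomial_mul, Finsupp.sumElim_eq_add]

lemma exists_eq_sumElim (e : σ ⊕ σ →₀ ℕ) : ∃ u v : σ →₀ ℕ, e = u.sumElim v :=
  ⟨_, _, (Finsupp.comapDomain_sumElim_comapDomain e).symm⟩

lemma map_monomial_eq_smul {M : Type*} [AddCommMonoid M] [Module R M]
    (L : MvPolynomial σ R →ₗ[R] M) (e : σ →₀ ℕ) (c : R) :
    L (monomial e c) = c • L (monomial e 1) := by
  rw [← map_smul, smul_monomial, smul_eq_mul, mul_one]

variable {K : Type*} [Field K] (φ ψ : MvPolynomial σ K →ₗ[K] K)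

/-- `φ ⊗ ψ`, read through `K[y, z] ≅ K[x] ⊗ K[x]`. -/
noncomputable def tensorFunctional : MvPolynomial (σ ⊕ σ) K →ₗ[K] K :=
  (basisMonomials (σ ⊕ σ) K).constr K fun e =>
    φ (monomial (e.comapDomain Sum.inl Sum.inl_injective.injOn) 1) *
      ψ (monomial (e.comapDomain Sum.inr Sum.inr_injective.injOn) 1)

lemma tensorFunctional_monomial (u v : σ →₀ ℕ) (c : K) :
    tensorFunctional φ ψ (monomial (u.sumElim v) c) =
      c * (φ (monomial u 1) * ψ (monomial v 1)) := by
  rw [map_monomial_eq_smul, smul_eq_mul, tensorFunctional]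
  congr 1
  exact ((basisMonomials (σ ⊕ σ) K).constr_basis K _ (u.sumElim v)).trans (by simp)

lemma tensorFunctional_eq_sum (p : MvPolynomial (σ ⊕ σ) K) :
    tensorFunctional φ ψ p =
      ∑ e ∈ p.support, coeff e p * tensorFunctional φ ψ (monomial e 1) := by
  conv_lhs => rw [p.as_sum, map_sum]
  refine Finset.sum_congr rfl fun e _ => ?_
  rw [map_monomial_eq_smul, smul_eq_mul]

lemma tensorFunctional_rename_mul_rename (g g' : MvPolynomial σ K) :
    tensorFunctional φ ψ (rename Sum.inl g * rename Sum.inr g') = φ g * ψ g' := by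
  induction g using MvPolynomial.induction_on' with
  | add p q hp hq => simp only [map_add, add_mul, hp, hq]
  | monomial u a =>
    induction g' using MvPolynomial.induction_on' with
    | add p q hp hq => simp only [map_add, mul_add, hp, hq]
    | monomial v b =>
      rw [rename_inl_monomial_mul_rename_inr_monomial, tensorFunctional_monomial,
        map_monomial_eq_smul φ u a, map_monomial_eq_smul ψ v b, smul_eq_mul, smul_eq_mul]
      ring

lemma tensorFunctional_mul_rename_inl {I : Ideal (MvPolynomial σ K)} (hφ : ∀ f ∈ I, φ f = 0)
    {h : MvPolynomial σ K} (hh : h ∈ I) (q : MvPolynomial (σ ⊕ σ) K) :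
    tensorFunctional φ ψ (q * rename Sum.inl h) = 0 := by
  induction q using MvPolynomial.induction_on' with
  | add p q hp hq => rw [add_mul, map_add, hp, hq, add_zero]
  | monomial e c =>
    obtain ⟨u, v, rfl⟩ := exists_eq_sumElim e
    rw [← mul_one c, ← rename_inl_monomial_mul_rename_inr_monomial, mul_right_comm, ← map_mul,
      tensorFunctional_rename_mul_rename, hφ _ (I.mul_mem_left _ hh), zero_mul]

lemma tensorFunctional_mul_rename_inr {J : Ideal (MvPolynomial σ K)} (hψ : ∀ f ∈ J, ψ f = 0)
    {h : MvPolynomial σ K} (hh : h ∈ J) (q : MvPolynomial (σ ⊕ σ) K) :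
    tensorFunctional φ ψ (q * rename Sum.inr h) = 0 := by
  induction q using MvPolynomial.induction_on' with
  | add p q hp hq => rw [add_mul, map_add, hp, hq, add_zero]
  | monomial e c =>
    obtain ⟨u, v, rfl⟩ := exists_eq_sumElim e
    rw [← mul_one c, ← rename_inl_monomial_mul_rename_inr_monomial, mul_assoc, ← map_mul,
      tensorFunctional_rename_mul_rename, hψ _ (J.mul_mem_left _ hh), mul_zero]

lemma tensorFunctional_eq_zero_of_mem {I J : Ideal (MvPolynomial σ K)}
    (hφ : ∀ f ∈ I, φ f = 0) (hψ : ∀ f ∈ J, ψ f = 0) {p : MvPolynomial (σ ⊕ σ) K}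
    (hp : p ∈ I.map (rename Sum.inl) ⊔ J.map (rename Sum.inr)) : tensorFunctional φ ψ p = 0 := by
  rw [Ideal.map, Ideal.map, ← Ideal.span_union] at hp
  refine Ideal.eq_zero_of_mem_span_of_mul (tensorFunctional φ ψ).toAddMonoidHom ?_ hp
  rintro _ (⟨h, hh, rfl⟩ | ⟨h, hh, rfl⟩)
  · exact tensorFunctional_mul_rename_inl φ ψ hφ hh
  · exact tensorFunctional_mul_rename_inr φ ψ hψ hh

end MvPolynomial

section InitialIdeal

variable {K : Type*} [Field K] {n : ℕ} (ord : LinearOrder (Fin n →₀ ℕ))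

lemma leadMonomial_mem_support {f : MvPolynomial (Fin n) K} (hf : f ≠ 0) :
    leadMonomial ord f hf ∈ f.support :=
  @Finset.max'_mem _ ord _ _

lemma le_leadMonomial {f : MvPolynomial (Fin n) K} (hf : f ≠ 0) {m : Fin n →₀ ℕ}
    (hm : m ∈ f.support) : ord.le m (leadMonomial ord f hf) :=
  @Finset.le_max' _ ord _ _ hm

lemma leadMonomial_eq {f : MvPolynomial (Fin n) K} (hf : f ≠ 0) {b : Fin n →₀ ℕ}
    (hb : b ∈ f.support) (h : ∀ m ∈ f.support, ord.le m b) : leadMonomial ord f hf = b :=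
  ord.le_antisymm _ _ (@Finset.max'_le _ ord _ _ _ h) (le_leadMonomial ord hf hb)

lemma monomial_leadMonomial_mem_initialIdeal {I : Ideal (MvPolynomial (Fin n) K)}
    {f : MvPolynomial (Fin n) K} (hfI : f ∈ I) (hf : f ≠ 0) :
    monomial (leadMonomial ord f hf) 1 ∈ initialIdeal ord I :=
  Ideal.subset_span ⟨f, hfI, hf, rfl⟩

lemma monomial_notMem_sup_restrictSupport {I : Ideal (MvPolynomial (Fin n) K)}
    {b : Fin n →₀ ℕ} (hb : monomial b (1 : K) ∉ initialIdeal ord I) :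
    monomial b 1 ∉ I.restrictScalars K ⊔ restrictSupport K {u | ord.lt u b} := by
  intro hmem
  obtain ⟨g, hg, h, hh, hgh⟩ := Submodule.mem_sup.mp hmem
  have hcoeff (m : Fin n →₀ ℕ) : coeff m g + coeff m h = if b = m then 1 else 0 := by
    rw [← coeff_add, hgh, coeff_monomial]
  have hbh : coeff b h = 0 :=
    notMem_support_iff.mp fun hb' => (@lt_irrefl _ ord.toPreorder b) (hh hb')
  have hbg : b ∈ g.support := by
    have hgb := hcoeff b
    rw [hbh, add_zero, if_pos rfl] at hgb
    exact mem_support_iff.mpr (hgb ▸ one_ne_zero)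
  have hg0 : g ≠ 0 := by rintro rfl; simp at hbg
  suffices leadMonomial ord g hg0 = b from
    hb (this ▸ monomial_leadMonomial_mem_initialIdeal ord hg hg0)
  refine leadMonomial_eq ord hg0 hbg fun m hm => ?_
  by_cases hmb : m = b
  · exact hmb ▸ ord.le_refl m
  · have hmh : m ∈ h.support := by
      have hsum := hcoeff m
      rw [if_neg (Ne.symm hmb)] at hsum
      rw [mem_support_iff, eq_neg_of_add_eq_zero_right hsum]
      exact neg_ne_zero.mpr (mem_support_iff.mp hm)
    exact @le_of_lt _ ord.toPreorder _ _ (hh hmh)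

lemma exists_linearMap_of_monomial_notMem_initialIdeal {I : Ideal (MvPolynomial (Fin n) K)}
    {b : Fin n →₀ ℕ} (hb : monomial b (1 : K) ∉ initialIdeal ord I) :
    ∃ φ : MvPolynomial (Fin n) K →ₗ[K] K, (∀ f ∈ I, φ f = 0) ∧ φ (monomial b 1) ≠ 0 ∧
      ∀ u, φ (monomial u 1) ≠ 0 → ord.le b u := by
  obtain ⟨φ, hφb, hφW⟩ := Submodule.exists_dual_map_eq_bot_of_notMem
    (monomial_notMem_sup_restrictSupport ord hb) inferInstance
  rw [← LinearMap.le_ker_iff_map] at hφW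
  refine ⟨φ, fun f hf => hφW (Submodule.mem_sup_left hf), hφb, fun u hu => ?_⟩
  by_contra hbu
  exact hu (hφW (Submodule.mem_sup_right ((monomial_mem_restrictSupport K).mpr
    (Or.inl ((@not_le _ ord _ _).mp hbu)))))

end InitialIdeal

section Join

variable {K : Type*} [Field K] {n : ℕ}

lemma mem_joinIdeal_iff {I J : Ideal (MvPolynomial (Fin n) K)} {f : MvPolynomial (Fin n) K} :
    f ∈ joinIdeal I J ↔ addSubst f ∈ I.map (rename Sum.inl) ⊔ J.map (rename Sum.inr) := by
  set T := I.map (rename Sum.inl) ⊔ J.map (rename Sum.inr)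
  set L := Ideal.span {p : MvPolynomial (Fin n ⊕ (Fin n ⊕ Fin n)) K | ∃ i : Fin n,
    p = X (Sum.inr (Sum.inl i)) + X (Sum.inr (Sum.inr i)) - X (Sum.inl i)}
  have hT : Ideal.map (rename fun i : Fin n => (Sum.inr (Sum.inl i) : Fin n ⊕ (Fin n ⊕ Fin n))) I ⊔
      Ideal.map (rename fun i : Fin n => (Sum.inr (Sum.inr i) : Fin n ⊕ (Fin n ⊕ Fin n))) J =
      T.map (rename Sum.inr) := by
    rw [Ideal.map_sup, Ideal.map_mapₐ, Ideal.map_mapₐ, rename_comp_rename, rename_comp_rename]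
    rfl
  let π : MvPolynomial (Fin n ⊕ (Fin n ⊕ Fin n)) K →ₐ[K] MvPolynomial (Fin n ⊕ Fin n) K :=
    aeval (Sum.elim (fun i => X (.inl i) + X (.inr i)) X)
  have hπx : π.comp (rename Sum.inl) = addSubst := algHom_ext fun i => by simp [π, addSubst]
  have hπyz : π.comp (rename Sum.inr) = AlgHom.id K _ := algHom_ext fun i => by simp [π]
  have hπL : L.map π = ⊥ := by
    rw [Ideal.map_span, Ideal.span_eq_bot]
    rintro _ ⟨_, ⟨i, rfl⟩, rfl⟩
    simp [π]
  have hL : rename Sum.inl f - rename Sum.inr (addSubst f) ∈ L := by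
    rw [← Ideal.Quotient.mk_eq_mk_iff_sub_mem]
    refine AlgHom.congr_fun (φ₁ := (Ideal.Quotient.mkₐ K L).comp (rename Sum.inl))
      (φ₂ := (Ideal.Quotient.mkₐ K L).comp ((rename Sum.inr).comp addSubst)) ?_ f
    refine algHom_ext fun i => ?_
    simp only [AlgHom.comp_apply, addSubst, aeval_X, Ideal.Quotient.mkₐ_eq_mk,
      Ideal.Quotient.mk_eq_mk_iff_sub_mem]
    rw [← neg_sub, map_add, rename_X, rename_X, rename_X]
    exact L.neg_mem (Ideal.subset_span ⟨i, rfl⟩)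
  change rename Sum.inl f ∈ _ ⊔ _ ⊔ L ↔ _
  rw [hT]
  constructor
  · intro hf
    have := Ideal.mem_map_of_mem π hf
    rw [Ideal.map_sup, hπL, sup_bot_eq, Ideal.map_mapₐ, hπyz, ← AlgHom.comp_apply, hπx] at this
    exact Ideal.map_le_of_le_comap (fun _ h => h) this
  · intro hf
    rw [← sub_add_cancel (rename Sum.inl f) (rename Sum.inr (addSubst f))]
    exact add_mem (Ideal.mem_sup_right hL) (Ideal.mem_sup_left (Ideal.mem_map_of_mem _ hf))

lemma joinIdeal_mono {I I' J J' : Ideal (MvPolynomial (Fin n) K)} (hI : I ≤ I') (hJ : J ≤ J') :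
    joinIdeal I J ≤ joinIdeal I' J' :=
  Ideal.comap_mono (sup_le_sup_right (sup_le_sup (Ideal.map_mono hI) (Ideal.map_mono hJ)) _)

end Join

section Main

variable {K : Type*} [Field K] {n : ℕ} (ord : LinearOrder (Fin n →₀ ℕ))
  (hadd : ∀ a b c : Fin n →₀ ℕ, ord.le a b → ord.le (a + c) (b + c))
include hadd

lemma eq_and_eq_of_add_le_add {u v u' v' : Fin n →₀ ℕ} (hu : ord.le u u') (hv : ord.le v v')
    (h : ord.le (u' + v') (u + v)) : u' = u ∧ v' = v := by
  have h₁ : ord.le (u + v) (u' + v) := hadd _ _ _ hu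
  have h₂ : ord.le (u' + v) (u' + v') := by simpa only [add_comm u'] using hadd _ _ u' hv
  have hu' : u' + v = u + v := ord.le_antisymm _ _ (ord.le_trans _ _ _ h₂ h) h₁
  have hv' : u' + v' = u' + v := ord.le_antisymm _ _ (hu' ▸ h) h₂
  exact ⟨add_right_cancel hu', add_left_cancel hv'⟩

lemma tensorFunctional_addSubst_ne_zero {f : MvPolynomial (Fin n) K} (hf : f ≠ 0)
    {u v : Fin n →₀ ℕ}
    (huv : u.sumElim v ∈ (addSubst (monomial (leadMonomial ord f hf) (1 : K))).support)
    {φ ψ : MvPolynomial (Fin n) K →ₗ[K] K}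
    (hφu : φ (monomial u 1) ≠ 0) (hφ : ∀ u', φ (monomial u' 1) ≠ 0 → ord.le u u')
    (hψv : ψ (monomial v 1) ≠ 0) (hψ : ∀ v', ψ (monomial v' 1) ≠ 0 → ord.le v v') :
    tensorFunctional φ ψ (addSubst f) ≠ 0 := by
  have hlead : u + v = leadMonomial ord f hf := by
    rw [← weight_foldWeight_sumElim]
    exact isWeightedHomogeneous_addSubst_monomial _ _ (mem_support_iff.mp huv)
  rw [tensorFunctional_eq_sum, Finset.sum_eq_single (u.sumElim v)]
  · rw [tensorFunctional_monomial, one_mul, coeff_addSubst, weight_foldWeight_sumElim, hlead]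
    exact mul_ne_zero (mul_ne_zero (mem_support_iff.mp (leadMonomial_mem_support ord hf))
      (mem_support_iff.mp huv)) (mul_ne_zero hφu hψv)
  · intro e he hne
    obtain ⟨u', v', rfl⟩ := exists_eq_sumElim e
    rw [tensorFunctional_monomial, one_mul]
    by_contra h
    obtain ⟨hφ', hψ'⟩ := mul_ne_zero_iff.mp (right_ne_zero_of_mul h)
    have hmem : u' + v' ∈ f.support := by
      have he' := mem_support_iff.mp he
      rw [coeff_addSubst, weight_foldWeight_sumElim] at he'
      exact mem_support_iff.mpr (left_ne_zero_of_mul he')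
    obtain ⟨rfl, rfl⟩ := eq_and_eq_of_add_le_add ord hadd (hφ u' hφ') (hψ v' hψ')
      (hlead ▸ le_leadMonomial ord hf hmem)
    exact hne rfl
  · intro h
    rw [notMem_support_iff.mp h, zero_mul]

lemma initialIdeal_joinIdeal_le (I J : Ideal (MvPolynomial (Fin n) K)) :
    initialIdeal ord (joinIdeal I J) ≤ joinIdeal (initialIdeal ord I) (initialIdeal ord J) := by
  rw [initialIdeal, Ideal.span_le]
  rintro _ ⟨f, hfIJ, hf, rfl⟩
  rw [mem_joinIdeal_iff] at hfIJ
  rw [SetLike.mem_coe, mem_joinIdeal_iff, (addSubst _).as_sum]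
  refine Ideal.sum_mem _ fun e he => ?_
  obtain ⟨u, v, rfl⟩ := exists_eq_sumElim e
  rw [← mul_one (coeff _ _), ← C_mul_monomial]
  refine Ideal.mul_mem_left _ _ ?_
  rw [← mul_one (1 : K), ← rename_inl_monomial_mul_rename_inr_monomial]
  by_contra hnot
  have hu : monomial u 1 ∉ initialIdeal ord I := fun hu =>
    hnot (Ideal.mem_sup_left (Ideal.mul_mem_right _ _ (Ideal.mem_map_of_mem _ hu)))
  have hv : monomial v 1 ∉ initialIdeal ord J := fun hv =>
    hnot (Ideal.mem_sup_right (Ideal.mul_mem_left _ _ (Ideal.mem_map_of_mem _ hv)))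
  obtain ⟨φ, hφI, hφu, hφ⟩ := exists_linearMap_of_monomial_notMem_initialIdeal ord hu
  obtain ⟨ψ, hψJ, hψv, hψ⟩ := exists_linearMap_of_monomial_notMem_initialIdeal ord hv
  exact tensorFunctional_addSubst_ne_zero ord hadd hf he hφu hφ hψv hψ
    (tensorFunctional_eq_zero_of_mem φ ψ hφI hψJ hfIJ)

end Main

theorem stmt_13_general (K : Type*) [Field K] (n r : ℕ)
    (ord : LinearOrder (Fin n →₀ ℕ))
    (hadd : ∀ a b c : Fin n →₀ ℕ, ord.le a b → ord.le (a + c) (b + c))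
    (I : Fin (r + 1) → Ideal (MvPolynomial (Fin n) K)) :
    initialIdeal ord (joinSeq r I) ≤ joinSeq r (fun t => initialIdeal ord (I t)) := by
  induction r with
  | zero => exact le_rfl
  | succ r ih =>
    exact (initialIdeal_joinIdeal_le ord hadd _ _).trans
      (joinIdeal_mono (ih fun t => I t.castSucc) le_rfl)

/-- for any ideals `I_1, ..., I_r` and any term order,
`in(I_1 * ⋯ * I_r) ⊆ in(I_1) * ⋯ * in(I_r)`. -/
theorem stmt_13 (K : Type*) [Field K] (n r : ℕ)
    (ord : LinearOrder (Fin n →₀ ℕ))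
    (hadd : ∀ a b c : Fin n →₀ ℕ, ord.le a b → ord.le (a + c) (b + c))
    (hzero : ∀ a : Fin n →₀ ℕ, ord.le 0 a)
    (I : Fin (r + 1) → Ideal (MvPolynomial (Fin n) K)) :
    initialIdeal ord (joinSeq r I) ≤ joinSeq r (fun t => initialIdeal ord (I t)) :=
  stmt_13_general K n r ord hadd I
end

section
/- Let K have characteristic zero and I a homogeneous ideal in K[x_1,...,x_n] with indeg(I) = d. If the r-th secant ideal I^{{r}} is nonzero, then indeg(I^{{r}}) ≥ rd - r + 1. -/
open MvPolynomial

/-- An ideal is homogeneous if it contains all homogeneous components of its elements. -/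
def IsHomogeneousIdeal {K : Type*} [Field K] {n : ℕ} (I : Ideal (MvPolynomial (Fin n) K)) :
    Prop :=
  ∀ f ∈ I, ∀ d : ℕ, homogeneousComponent d f ∈ I

/-- `indeg I`: the smallest degree of a nonzero homogeneous element of `I`. -/
noncomputable def indeg {K : Type*} [Field K] {n : ℕ} (I : Ideal (MvPolynomial (Fin n) K)) :
    ℕ :=
  sInf {d : ℕ | ∃ f ∈ I, f ≠ 0 ∧ MvPolynomial.IsHomogeneous f d}

/-!
Write `f_e` for the degree-`e` component of `f`, and suppose `I` and `J` have no nonzero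
components in degrees `≤ a` and `≤ b` respectively. The substitution `x ↦ (s + t) x`,
`y ↦ s x`, `z ↦ t x` into `K[x][s][t]` kills the linear forms `y_i + z_i - x_i` and sends
`I(y)` into `(s^(a+1))` and `J(z)` into `(t^(b+1))`. An element `f` of the join therefore maps
to `∑ₑ (s + t)^e f_e ∈ (s^(a+1), t^(b+1))`. For `e ≤ a + b`, write `e = j + k` with `k ≤ a`
and `j ≤ b`; the coefficient of `s^k t^j` is `(e choose j) f_e`, which must vanish, so
`f_e = 0` in characteristic zero. Hence the join has no components in degrees `≤ a + b`, and
induction on `r` shows that `I^{r}` has none below `r (d - 1) + 1`.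
-/

namespace Polynomial

variable {R : Type*} [CommRing R]

-- In `R[X][X]`, `C X` plays the role of `s` and the outer `X` that of `t`.
theorem coeff_coeff_C_X_add_X_pow_mul_C_C (h : R) (e j k : ℕ) :
    (((C X + X) ^ e * C (C h) : R[X][X]).coeff j).coeff k =
      if j + k = e then (e.choose j : R) * h else 0 := by
  rw [add_comm, coeff_mul_C, coeff_X_add_C_pow, mul_assoc, coeff_X_pow_mul', ← C_eq_natCast,
    ← C_mul, coeff_C]
  split_ifs <;> first | rfl | omega |
    rw [Nat.choose_eq_zero_of_lt (by omega), Nat.cast_zero, zero_mul]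

theorem coeff_coeff_eq_zero_of_mem_span_sup {q : R[X][X]} {a b j k : ℕ}
    (hq : q ∈ Ideal.span {C X ^ a} ⊔ Ideal.span {X ^ b}) (hk : k < a) (hj : j < b) :
    (q.coeff j).coeff k = 0 := by
  obtain ⟨q₁, hq₁, q₂, hq₂, rfl⟩ := Submodule.mem_sup.mp hq
  obtain ⟨w₁, rfl⟩ := Ideal.mem_span_singleton'.mp hq₁
  obtain ⟨w₂, rfl⟩ := Ideal.mem_span_singleton'.mp hq₂
  rw [← C_pow, coeff_add, coeff_mul_C, coeff_mul_X_pow', if_neg (by omega), coeff_add,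
    coeff_mul_X_pow', if_neg (by omega), coeff_zero, add_zero]

end Polynomial

namespace MvPolynomial

attribute [local instance] MvPolynomial.gradedAlgebra

def ComponentsVanishBelow {R σ : Type*} [CommSemiring R] (I : Ideal (MvPolynomial σ R))
    (a : ℕ) : Prop :=
  ∀ p ∈ I, ∀ k < a, homogeneousComponent k p = 0

section Scaling

variable {R σ S : Type*} [CommSemiring R] [CommSemiring S] [Algebra R S]

theorem aeval_mul_left_of_isHomogeneous (c : S) (g : σ → S) {q : MvPolynomial σ R} {e : ℕ}
    (hq : q.IsHomogeneous e) : aeval (fun i => c * g i) q = c ^ e * aeval g q := by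
  conv_lhs => rw [q.as_sum, map_sum]
  conv_rhs => rw [q.as_sum, map_sum, Finset.mul_sum]
  refine Finset.sum_congr rfl fun m hm => ?_
  have hdeg : ∑ i ∈ m.support, m i = e := by
    simpa [Finsupp.weight_apply, Finsupp.sum] using hq (mem_support_iff.mp hm)
  simp only [aeval_monomial, Finsupp.prod, mul_pow, Finset.prod_mul_distrib,
    Finset.prod_pow_eq_pow_sum, hdeg]
  ring

theorem ComponentsVanishBelow.aeval_mul_left_mem {I : Ideal (MvPolynomial σ R)} {a : ℕ}
    (hI : ComponentsVanishBelow I a) (c : S) (g : σ → S) {p : MvPolynomial σ R} (hp : p ∈ I) :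
    aeval (fun i => c * g i) p ∈ Ideal.span {c ^ a} := by
  rw [← p.sum_homogeneousComponent, map_sum]
  refine Ideal.sum_mem _ fun e _ => ?_
  rw [aeval_mul_left_of_isHomogeneous c g (homogeneousComponent_isHomogeneous e p)]
  rcases lt_or_ge e a with h | h
  · rw [hI p hp e h, map_zero, mul_zero]
    exact zero_mem _
  · exact Ideal.mem_span_singleton.2 ((pow_dvd_pow c h).mul_right _)

theorem aeval_mul_algebraMap_X [Algebra (MvPolynomial σ R) S]
    [IsScalarTower R (MvPolynomial σ R) S] (c : S) (f : MvPolynomial σ R) :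
    aeval (fun i => c * algebraMap (MvPolynomial σ R) S (X i)) f =
      ∑ e ∈ Finset.range (f.totalDegree + 1),
        c ^ e * algebraMap (MvPolynomial σ R) S (homogeneousComponent e f) := by
  conv_lhs => rw [← f.sum_homogeneousComponent, map_sum]
  refine Finset.sum_congr rfl fun e _ => ?_
  rw [aeval_mul_left_of_isHomogeneous _ _ (homogeneousComponent_isHomogeneous e f)]
  congr 1
  simpa using (comp_aeval_apply (f := X) (IsScalarTower.toAlgHom R (MvPolynomial σ R) S)
    (homogeneousComponent e f)).symm

end Scaling

section Homogeneity

variable {R σ τ : Type*} [CommSemiring R]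

theorem isHomogeneous_iff_homogeneousComponent_mem {I : Ideal (MvPolynomial σ R)} :
    I.IsHomogeneous (homogeneousSubmodule σ R) ↔
      ∀ p ∈ I, ∀ k, homogeneousComponent k p ∈ I :=
  ⟨fun hI _ hp k => homogeneousComponent_mem_of_mem hI hp k,
    fun h k p hp => (decomposition.decompose'_apply p k).symm ▸ h p hp k⟩

theorem _root_.Ideal.IsHomogeneous.map_rename (f : σ → τ) {I : Ideal (MvPolynomial σ R)}
    (hI : I.IsHomogeneous (homogeneousSubmodule σ R)) :
    (I.map (rename f)).IsHomogeneous (homogeneousSubmodule τ R) := by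
  obtain ⟨S, rfl⟩ := (Ideal.IsHomogeneous.iff_exists _ _).mp hI
  rw [Ideal.map_span]
  refine Ideal.homogeneous_span _ _ ?_
  rintro _ ⟨_, ⟨p, -, rfl⟩, rfl⟩
  obtain ⟨k, hk⟩ := p.2
  exact ⟨k, (mem_homogeneousSubmodule _ _).mpr
    ((mem_homogeneousSubmodule _ _).mp hk).rename_isHomogeneous⟩

theorem _root_.Ideal.IsHomogeneous.comap_rename (f : σ → τ) {J : Ideal (MvPolynomial τ R)}
    (hJ : J.IsHomogeneous (homogeneousSubmodule τ R)) :
    (J.comap (rename f)).IsHomogeneous (homogeneousSubmodule σ R) := by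
  rw [isHomogeneous_iff_homogeneousComponent_mem] at hJ ⊢
  intro p hp k
  rw [Ideal.mem_comap, rename_homogeneousComponent]
  exact hJ _ hp k

end Homogeneity

variable {K : Type*} [Field K] {n : ℕ} {I J : Ideal (MvPolynomial (Fin n) K)}

theorem isHomogeneousIdeal_joinIdeal (hI : IsHomogeneousIdeal I) (hJ : IsHomogeneousIdeal J) :
    IsHomogeneousIdeal (joinIdeal I J) := by
  refine isHomogeneous_iff_homogeneousComponent_mem.mp (.comap_rename _ (.sup (.sup ?_ ?_) ?_))
  · exact .map_rename _ (isHomogeneous_iff_homogeneousComponent_mem.mpr hI)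
  · exact .map_rename _ (isHomogeneous_iff_homogeneousComponent_mem.mpr hJ)
  · refine Ideal.homogeneous_span _ _ ?_
    rintro _ ⟨i, rfl⟩
    exact ⟨1, (mem_homogeneousSubmodule _ _).mpr
      (((isHomogeneous_X _ _).add (isHomogeneous_X _ _)).sub (isHomogeneous_X _ _))⟩

theorem aeval_add_mul_mem_of_mem_joinIdeal {a b : ℕ} (hI : ComponentsVanishBelow I a)
    (hJ : ComponentsVanishBelow J b) {S : Type*} [CommRing S] [Algebra K S] (c₁ c₂ : S)
    (g : Fin n → S) {f : MvPolynomial (Fin n) K} (hf : f ∈ joinIdeal I J) :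
    aeval (fun i => (c₁ + c₂) * g i) f ∈ Ideal.span {c₁ ^ a} ⊔ Ideal.span {c₂ ^ b} := by
  let G : Fin n ⊕ (Fin n ⊕ Fin n) → S :=
    Sum.elim (fun i => (c₁ + c₂) * g i) (Sum.elim (fun i => c₁ * g i) (fun i => c₂ * g i))
  rw [joinIdeal, Ideal.mem_comap] at hf
  have hG : aeval (fun i => (c₁ + c₂) * g i) f = aeval G (rename Sum.inl f) := by
    rw [aeval_rename]
    rfl
  rw [hG, ← Ideal.mem_comap]
  refine (sup_le (sup_le ?_ ?_) ?_ : _ ≤ Ideal.comap (aeval G) _) hf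
  · rw [Ideal.map_le_iff_le_comap]
    intro p hp
    rw [Ideal.mem_comap, Ideal.mem_comap, aeval_rename]
    exact Ideal.mem_sup_left (hI.aeval_mul_left_mem c₁ g hp)
  · rw [Ideal.map_le_iff_le_comap]
    intro p hp
    rw [Ideal.mem_comap, Ideal.mem_comap, aeval_rename]
    exact Ideal.mem_sup_right (hJ.aeval_mul_left_mem c₂ g hp)
  · rw [Ideal.span_le]
    rintro _ ⟨i, rfl⟩
    rw [SetLike.mem_coe, Ideal.mem_comap]
    simp only [map_sub, map_add, aeval_X, G, Sum.elim_inl, Sum.elim_inr, add_mul, sub_self,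
      zero_mem]

theorem ComponentsVanishBelow.joinIdeal [CharZero K] {a b : ℕ}
    (hI : ComponentsVanishBelow I (a + 1)) (hJ : ComponentsVanishBelow J (b + 1)) :
    ComponentsVanishBelow (joinIdeal I J) (a + b + 1) := by
  intro f hf e he
  obtain ⟨j, k, rfl, hj, hk⟩ : ∃ j k, j + k = e ∧ j < b + 1 ∧ k < a + 1 :=
    ⟨e - min e a, min e a, by omega, by omega, by omega⟩
  have hmem := aeval_add_mul_mem_of_mem_joinIdeal hI hJ (Polynomial.C Polynomial.X)
    Polynomial.X (fun i => algebraMap (MvPolynomial (Fin n) K)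
      (Polynomial (Polynomial (MvPolynomial (Fin n) K))) (X i)) hf
  rw [aeval_mul_algebraMap_X] at hmem
  have hcoeff := Polynomial.coeff_coeff_eq_zero_of_mem_span_sup hmem hk hj
  simp only [Polynomial.finsetSum_coeff, Polynomial.algebraMap_apply, Algebra.algebraMap_self,
    RingHom.id_apply, Polynomial.coeff_coeff_C_X_add_X_pow_mul_C_C, Finset.sum_ite_eq,
    Finset.mem_range] at hcoeff
  split_ifs at hcoeff with hdeg
  · exact (mul_eq_zero.mp hcoeff).resolve_left
      (Nat.cast_ne_zero.mpr (Nat.choose_pos (by omega)).ne')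
  · exact homogeneousComponent_eq_zero _ _ (by omega)

theorem isHomogeneousIdeal_secantIdeal (hI : IsHomogeneousIdeal I) :
    ∀ r, IsHomogeneousIdeal (secantIdeal I (r + 1))
  | 0 => hI
  | r + 1 => isHomogeneousIdeal_joinIdeal (isHomogeneousIdeal_secantIdeal hI r) hI

theorem componentsVanishBelow_secantIdeal [CharZero K] {d : ℕ}
    (hI : ComponentsVanishBelow I (d + 1)) :
    ∀ r, ComponentsVanishBelow (secantIdeal I (r + 1)) ((r + 1) * d + 1)
  | 0 => by simpa [secantIdeal] using hI
  | r + 1 => by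
    rw [show (r + 1 + 1) * d + 1 = (r + 1) * d + d + 1 by ring]
    exact (componentsVanishBelow_secantIdeal hI r).joinIdeal hI

theorem componentsVanishBelow_indeg (hI : IsHomogeneousIdeal I) :
    ComponentsVanishBelow I (indeg I) := by
  intro p hp k hk
  by_contra hne
  exact hk.not_ge (Nat.sInf_le ⟨_, hI p hp k, hne, homogeneousComponent_isHomogeneous k p⟩)

theorem le_indeg_of_componentsVanishBelow (hI : IsHomogeneousIdeal I) (hne : I ≠ ⊥) {a : ℕ}
    (h : ComponentsVanishBelow I a) : a ≤ indeg I := by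
  obtain ⟨p, hp, hp0⟩ := Submodule.exists_mem_ne_zero_of_ne_bot hne
  obtain ⟨k, hk⟩ : ∃ k, homogeneousComponent k p ≠ 0 := by
    by_contra! hzero
    exact hp0 (by rw [← p.sum_homogeneousComponent]; exact Finset.sum_eq_zero fun k _ => hzero k)
  refine le_csInf ⟨k, _, hI p hp k, hk, homogeneousComponent_isHomogeneous k p⟩ ?_
  rintro m ⟨f, hf, hf0, hfm⟩
  by_contra! hm
  exact hf0 ((homogeneousComponent_eq_self hfm).symm.trans (h f hf m hm))

end MvPolynomial

/-- in characteristic zero, for a homogeneous ideal `I` with `indeg I = d`,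
if the `r`-th secant `I^{r}` is nonzero then `indeg(I^{r}) ≥ rd - r + 1`. -/
theorem stmt_15 (K : Type*) [Field K] [CharZero K] (n : ℕ)
    (I : Ideal (MvPolynomial (Fin n) K)) (hI : IsHomogeneousIdeal I)
    (d r : ℕ) (hr : 1 ≤ r) (hd : indeg I = d)
    (hne : secantIdeal I r ≠ ⊥) :
    (r : ℤ) * d - r + 1 ≤ (indeg (secantIdeal I r) : ℤ) := by
  obtain ⟨r, rfl⟩ := Nat.exists_eq_add_of_le' hr
  rcases d with _ | d
  · push_cast
    omega
  · have hbound := le_indeg_of_componentsVanishBelow (isHomogeneousIdeal_secantIdeal hI r) hne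
      (componentsVanishBelow_secantIdeal (hd ▸ componentsVanishBelow_indeg hI) r)
    push_cast at hbound ⊢
    linarith
end

section
/- In characteristic 2, the join of ⟨x^3⟩ with itself in K[x] equals ⟨x^4⟩; in particular the characteristic-zero formula ⟨x^i⟩ * ⟨x^j⟩ = ⟨x^{i+j-1}⟩ fails. -/
/-!
Eliminating `x` along the linear forms `y + z - x` amounts to substituting `x ↦ y + z`, so the
join `I * J` is the preimage of `I(y) + J(z)` under `f(x) ↦ f(y + z)`. For `I = J = ⟨x³⟩` that
ideal is `⟨y³, z³⟩`. In characteristic 2 it contains `(y + z)⁴ = y⁴ + z⁴`, but not `(y + z)³`,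
whose monomial `y²z` has coefficient `3 ≠ 0` and is divisible by neither `y³` nor `z³`. As `K[x]`
is a principal ideal domain and `x` is prime, the join is therefore `⟨x⁴⟩`, not `⟨x⁵⟩`.
-/

open MvPolynomial

theorem Ideal.eq_span_pow_succ_of_mem_of_notMem {R : Type*} [CommRing R] [IsDomain R]
    [IsPrincipalIdealRing R] {p : R} (hp : Prime p) {n : ℕ} {J : Ideal R}
    (hmem : p ^ (n + 1) ∈ J) (hnot : p ^ n ∉ J) : J = Ideal.span {p ^ (n + 1)} := by
  obtain ⟨g, rfl⟩ := (IsPrincipalIdealRing.principal J).principal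
  simp only [Ideal.submodule_span_eq, Ideal.mem_span_singleton] at hmem hnot ⊢
  obtain ⟨i, hi, hassoc⟩ := (dvd_prime_pow hp _).1 hmem
  obtain rfl : i = n + 1 := by
    by_contra hne
    exact hnot (hassoc.dvd.trans (pow_dvd_pow p (by omega)))
  exact Ideal.span_singleton_eq_span_singleton.mpr hassoc

instance MvPolynomial.isPrincipalIdealRing_of_unique {K σ : Type*} [Field K] [Unique σ] :
    IsPrincipalIdealRing (MvPolynomial σ K) :=
  .of_surjective (uniqueAlgEquiv K σ).symm (uniqueAlgEquiv K σ).symm.surjective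

theorem MvPolynomial.coeff_X_add_X_pow_three {σ R : Type*} [CommSemiring R] {a b : σ}
    (hab : a ≠ b) :
    coeff (Finsupp.single a 2 + Finsupp.single b 1) ((X a + X b : MvPolynomial σ R) ^ 3) = 3 := by
  classical
  have hexp : (X a + X b : MvPolynomial σ R) ^ 3 =
      monomial (Finsupp.single a 3) 1 + monomial (Finsupp.single b 3) 1 +
        monomial (Finsupp.single a 2 + Finsupp.single b 1) 3 +
        monomial (Finsupp.single a 1 + Finsupp.single b 2) 3 := by
    simp only [monomial_add_single, ← C_mul_X_pow_eq_monomial, map_one, map_ofNat]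
    ring
  have h₁ : Finsupp.single a 3 ≠ Finsupp.single a 2 + Finsupp.single b 1 := fun h => by
    simpa [hab.symm] using DFunLike.congr_fun h a
  have h₂ : Finsupp.single b 3 ≠ Finsupp.single a 2 + Finsupp.single b 1 := fun h => by
    simpa [hab] using DFunLike.congr_fun h b
  have h₃ : Finsupp.single a 1 + Finsupp.single b 2 ≠
      Finsupp.single a 2 + Finsupp.single b 1 := fun h => by
    simpa [hab.symm] using DFunLike.congr_fun h a
  simp [hexp, coeff_monomial, h₁, h₂, h₃]

/-- The monomial `a²b` of `(a + b)³` is divisible by neither `a³` nor `b³`. -/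
theorem MvPolynomial.X_add_X_pow_three_notMem_span {σ R : Type*} [CommSemiring R] {a b : σ}
    (hab : a ≠ b) (h3 : (3 : R) ≠ 0) :
    (X a + X b : MvPolynomial σ R) ^ 3 ∉ Ideal.span {X a ^ 3, X b ^ 3} := by
  have hmonomials : ({X a ^ 3, X b ^ 3} : Set (MvPolynomial σ R)) =
      (fun s => monomial s 1) '' {Finsupp.single a 3, Finsupp.single b 3} := by
    simp [Set.image_insert_eq, X_pow_eq_monomial]
  rw [hmonomials, mem_ideal_span_monomial_image]
  intro h
  obtain ⟨s, hs, hle⟩ := h (Finsupp.single a 2 + Finsupp.single b 1)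
    (by rw [mem_support_iff, coeff_X_add_X_pow_three hab]; exact h3)
  rcases hs with rfl | rfl
  · simpa [hab.symm] using hle a
  · simpa [hab] using hle b

section Join

variable {K : Type*} [Field K] {n : ℕ}

local notation "S" => MvPolynomial (Fin n ⊕ (Fin n ⊕ Fin n)) K

noncomputable def substYAddZ : MvPolynomial (Fin n) K →ₐ[K] S :=
  aeval fun i => X (Sum.inr (Sum.inl i)) + X (Sum.inr (Sum.inr i))

/-- The ideal `I(y) + J(z)`. -/
noncomputable def prodIdeal (I J : Ideal (MvPolynomial (Fin n) K)) : Ideal S :=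
  I.map (rename fun i => Sum.inr (Sum.inl i)) ⊔ J.map (rename fun i => Sum.inr (Sum.inr i))

noncomputable def sumRelationIdeal : Ideal S :=
  Ideal.span {p | ∃ i : Fin n,
    p = X (Sum.inr (Sum.inl i)) + X (Sum.inr (Sum.inr i)) - X (Sum.inl i)}

theorem joinIdeal_eq_comap_rename (I J : Ideal (MvPolynomial (Fin n) K)) :
    joinIdeal I J = (prodIdeal I J ⊔ sumRelationIdeal).comap (rename Sum.inl) :=
  rfl

@[simp]
theorem substYAddZ_X (i : Fin n) :
    substYAddZ (X i : MvPolynomial (Fin n) K) =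
      X (Sum.inr (Sum.inl i)) + X (Sum.inr (Sum.inr i)) :=
  aeval_X _ _

theorem joinIdeal_le_comap (I J : Ideal (MvPolynomial (Fin n) K)) :
    joinIdeal I J ≤ (prodIdeal I J).comap substYAddZ := by
  -- `ψ` substitutes `x ↦ y + z` and fixes `y`, `z`, so it kills the relations `y + z - x`.
  let ψ : S →ₐ[K] S := aeval <| Sum.elim
    (fun i => X (Sum.inr (Sum.inl i)) + X (Sum.inr (Sum.inr i))) (fun v => X (Sum.inr v))
  have hψx : ψ.comp (rename Sum.inl) = substYAddZ := by ext i; simp [ψ]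
  have hψy : ψ.comp (rename fun i : Fin n => Sum.inr (Sum.inl i)) =
      rename fun i => Sum.inr (Sum.inl i) := by ext i; simp [ψ]
  have hψz : ψ.comp (rename fun i : Fin n => Sum.inr (Sum.inr i)) =
      rename fun i => Sum.inr (Sum.inr i) := by ext i; simp [ψ]
  have hle : prodIdeal I J ⊔ sumRelationIdeal ≤ (prodIdeal I J).comap ψ := by
    refine sup_le (sup_le ?_ ?_) ?_
    · rw [Ideal.map_le_iff_le_comap]
      intro g hg
      rw [Ideal.mem_comap, Ideal.mem_comap, ← AlgHom.comp_apply, hψy]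
      exact Ideal.mem_sup_left (Ideal.mem_map_of_mem _ hg)
    · rw [Ideal.map_le_iff_le_comap]
      intro g hg
      rw [Ideal.mem_comap, Ideal.mem_comap, ← AlgHom.comp_apply, hψz]
      exact Ideal.mem_sup_right (Ideal.mem_map_of_mem _ hg)
    · rw [sumRelationIdeal, Ideal.span_le]
      rintro _ ⟨i, rfl⟩
      simp [ψ]
  rw [joinIdeal_eq_comap_rename, ← hψx]
  exact fun f hf => hle hf

theorem comap_le_joinIdeal (I J : Ideal (MvPolynomial (Fin n) K)) :
    (prodIdeal I J).comap substYAddZ ≤ joinIdeal I J := by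
  intro f hf
  rw [joinIdeal_eq_comap_rename, Ideal.mem_comap, ← Ideal.Quotient.eq_zero_iff_mem]
  set B : Ideal S := prodIdeal I J ⊔ sumRelationIdeal
  have hxyz : (Ideal.Quotient.mkₐ K B).comp (rename Sum.inl) =
      (Ideal.Quotient.mkₐ K B).comp substYAddZ := by
    ext i
    simp only [AlgHom.comp_apply, rename_X, substYAddZ_X, Ideal.Quotient.mkₐ_eq_mk]
    rw [Ideal.Quotient.eq, ← neg_sub]
    exact neg_mem (Ideal.mem_sup_right (Ideal.subset_span ⟨i, rfl⟩ : _ ∈ sumRelationIdeal))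
  rw [← Ideal.Quotient.mkₐ_eq_mk K, ← AlgHom.comp_apply, hxyz, AlgHom.comp_apply,
    Ideal.Quotient.mkₐ_eq_mk, Ideal.Quotient.eq_zero_iff_mem]
  exact Ideal.mem_sup_left hf

theorem joinIdeal_eq_comap_s16 (I J : Ideal (MvPolynomial (Fin n) K)) :
    joinIdeal I J = (prodIdeal I J).comap substYAddZ :=
  le_antisymm (joinIdeal_le_comap I J) (comap_le_joinIdeal I J)

theorem prodIdeal_span_singleton (f g : MvPolynomial (Fin n) K) :
    prodIdeal (Ideal.span {f}) (Ideal.span {g}) =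
      Ideal.span {rename (fun i => Sum.inr (Sum.inl i)) f,
        rename (fun i => Sum.inr (Sum.inr i)) g} := by
  simp [prodIdeal, Ideal.map_span, Ideal.span_insert]

theorem X_pow_four_mem_joinIdeal [CharP K 2] (i : Fin n) :
    (X i : MvPolynomial (Fin n) K) ^ 4 ∈
      joinIdeal (Ideal.span {X i ^ 3}) (Ideal.span {X i ^ 3}) := by
  rw [joinIdeal_eq_comap_s16, Ideal.mem_comap, prodIdeal_span_singleton]
  simp only [map_pow, substYAddZ_X, rename_X]
  rw [show 4 = 2 ^ 2 from rfl, add_pow_char_pow]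
  exact Ideal.mem_span_pair.2 ⟨X (Sum.inr (Sum.inl i)), X (Sum.inr (Sum.inr i)), by ring⟩

theorem X_pow_three_notMem_joinIdeal (h3 : (3 : K) ≠ 0) (i : Fin n) :
    (X i : MvPolynomial (Fin n) K) ^ 3 ∉
      joinIdeal (Ideal.span {X i ^ 3}) (Ideal.span {X i ^ 3}) := by
  rw [joinIdeal_eq_comap_s16, Ideal.mem_comap, prodIdeal_span_singleton]
  simp only [map_pow, substYAddZ_X, rename_X]
  exact X_add_X_pow_three_notMem_span (by simp) h3

end Join

/-- in characteristic `2`, `⟨x^3⟩ * ⟨x^3⟩ = ⟨x^4⟩`; in particular the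
characteristic-zero formula `⟨x^i⟩ * ⟨x^j⟩ = ⟨x^{i+j-1}⟩` (which would give `⟨x^5⟩`) fails. -/
theorem stmt_16 (K : Type*) [Field K] [CharP K 2] :
    joinIdeal (Ideal.span {(X 0 : MvPolynomial (Fin 1) K) ^ 3})
        (Ideal.span {(X 0 : MvPolynomial (Fin 1) K) ^ 3})
      = Ideal.span {(X 0 : MvPolynomial (Fin 1) K) ^ 4} ∧
    joinIdeal (Ideal.span {(X 0 : MvPolynomial (Fin 1) K) ^ 3})
        (Ideal.span {(X 0 : MvPolynomial (Fin 1) K) ^ 3})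
      ≠ Ideal.span {(X 0 : MvPolynomial (Fin 1) K) ^ (3 + 3 - 1)} := by
  have h3 : (3 : K) ≠ 0 := by
    rw [show (3 : K) = 2 + 1 by norm_num, CharTwo.two_eq_zero, zero_add]
    exact one_ne_zero
  have hX : Prime (X 0 : MvPolynomial (Fin 1) K) := X_prime
  have hjoin := Ideal.eq_span_pow_succ_of_mem_of_notMem (n := 3) hX
    (X_pow_four_mem_joinIdeal 0) (X_pow_three_notMem_joinIdeal h3 0)
  refine ⟨hjoin, ?_⟩
  rw [hjoin, Ne, Ideal.span_singleton_eq_span_singleton]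
  intro h
  have := (pow_dvd_pow_iff hX.ne_zero hX.not_isUnit).1 h.symm.dvd
  omega
end
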